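/- arXiv:2604.10682 — 7 statements merged into one kernel-verified Lean document; each statement's English description precedes it below -/
import Mathlib

section
/- Let N ≥ 1 be an integer, c₀ > 0, μ > 0 and t > 0. Let A : ℝ → Matrix (Fin N) (Fin N) ℝ be such that for every τ ∈ [0, t] the matrix A(τ) is coercive with constant c₀μ, i.e. ⟨v, A(τ)·v⟩ ≥ c₀ μ ‖v‖² for every v ∈ ℝ^N. Let 𝒦 : ℝ → Matrix (Fin N) (Fin N) ℝ be continuous on [0, t] with 𝒦(0) = Id (the identity matrix) and such that for every τ ∈ (0, t), 𝒦 has derivative −𝒦(τ)·A(τ) at τ. Then ‖𝒦(τ)‖_F ≤ √N · e^{−c₀ μ τ} for every τ ∈ [0, t]. -/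
open Set

/-- The Frobenius norm of a real `N × N` matrix. -/
noncomputable def frobNorm {N : ℕ} (M : Matrix (Fin N) (Fin N) ℝ) : ℝ :=
  Real.sqrt (∑ i, ∑ j, (M i j) ^ 2)

/-!
The squared Frobenius norm `f(τ) = ∑ᵢⱼ 𝒦ᵢⱼ(τ)²` satisfies `f' = -2 ∑ᵢ ⟨rowᵢ 𝒦, A rowᵢ 𝒦⟩`,
so coercivity of `A`, applied to each row of `𝒦`, gives `f' ≤ -2 c₀ μ f`. Hence
`f(τ) e^{2 c₀ μ τ}` is antitone, `f(τ) ≤ f(0) e^{-2 c₀ μ τ} = N e^{-2 c₀ μ τ}`, and taking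
square roots gives the claim.
-/

theorem le_mul_exp_of_hasDerivAt_le_neg_mul {f f' : ℝ → ℝ} {k a b : ℝ}
    (hf : ContinuousOn f (Icc a b)) (hf' : ∀ x ∈ Ioo a b, HasDerivAt f (f' x) x)
    (bound : ∀ x ∈ Ioo a b, f' x ≤ -k * f x) :
    ∀ x ∈ Icc a b, f x ≤ f a * Real.exp (-k * (x - a)) := by
  set g : ℝ → ℝ := fun x => f x * Real.exp (k * x)
  have hg_anti : AntitoneOn g (Icc a b) := by
    refine antitoneOn_of_hasDerivWithinAt_nonpos (convex_Icc a b)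
      (hf.mul (Real.continuous_exp.comp (continuous_const_mul k)).continuousOn)
      (f' := fun x => (f' x + k * f x) * Real.exp (k * x)) ?_ ?_ <;>
      intro x hx <;> rw [interior_Icc] at hx
    · have hexp : HasDerivAt (fun x => Real.exp (k * x)) (Real.exp (k * x) * k) x := by
        simpa using ((hasDerivAt_id x).const_mul k).exp
      exact ((hf' x hx).mul hexp).congr_deriv (by ring) |>.hasDerivWithinAt
    · exact mul_nonpos_of_nonpos_of_nonneg (by linarith [bound x hx]) (Real.exp_pos _).le
  intro x hx
  have hgx : f x * Real.exp (k * x) ≤ f a * Real.exp (k * a) :=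
    hg_anti ⟨le_rfl, hx.1.trans hx.2⟩ hx hx.1
  calc f x = f x * Real.exp (k * x) * Real.exp (-(k * x)) := by
        rw [mul_assoc, ← Real.exp_add, add_neg_cancel, Real.exp_zero, mul_one]
    _ ≤ f a * Real.exp (k * a) * Real.exp (-(k * x)) := by gcongr
    _ = f a * Real.exp (-k * (x - a)) := by
        rw [mul_assoc, ← Real.exp_add]; ring_nf

section Matrix

variable {m n : Type*} [Fintype n]

theorem Matrix.hasDerivAt_sum_sq_apply [Fintype m] {K : ℝ → Matrix m n ℝ} {K' : Matrix m n ℝ}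
    {τ : ℝ} (hK : ∀ i j, HasDerivAt (fun s => K s i j) (K' i j) τ) :
    HasDerivAt (fun s => ∑ i, ∑ j, K s i j ^ 2) (2 * ∑ i, ∑ j, K τ i j * K' i j) τ := by
  simp only [Finset.mul_sum]
  exact HasDerivAt.fun_sum fun i _ => HasDerivAt.fun_sum fun j _ =>
    ((hK i j).fun_pow 2).congr_deriv (by norm_num; ring)

theorem Matrix.sum_mul_mul_apply_eq_sum_quadratic (M : Matrix m n ℝ) (B : Matrix n n ℝ) (i : m) :
    ∑ j, M i j * (M * B) i j = ∑ k, ∑ j, M i k * B k j * M i j := by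
  simp only [Matrix.mul_apply, Finset.mul_sum]
  rw [Finset.sum_comm]
  exact Finset.sum_congr rfl fun k _ => Finset.sum_congr rfl fun j _ => by ring

theorem Matrix.mul_sum_sq_apply_le_of_coercive [Fintype m] {c : ℝ} {B : Matrix n n ℝ}
    (hB : ∀ v : n → ℝ, c * ∑ i, v i ^ 2 ≤ ∑ i, ∑ j, v i * B i j * v j) (M : Matrix m n ℝ) :
    c * ∑ i, ∑ j, M i j ^ 2 ≤ ∑ i, ∑ j, M i j * (M * B) i j := by
  rw [Finset.mul_sum]
  refine Finset.sum_le_sum fun i _ => ?_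
  rw [Matrix.sum_mul_mul_apply_eq_sum_quadratic]
  exact hB (M i)

theorem Matrix.sum_sq_one_apply [DecidableEq n] :
    ∑ i, ∑ j, (1 : Matrix n n ℝ) i j ^ 2 = Fintype.card n := by
  simp [Matrix.one_apply, ite_pow]

end Matrix

theorem matrix_ode_exponential_decay_general
    (N : ℕ) (c₀ μ t : ℝ)
    (A 𝒦 : ℝ → Matrix (Fin N) (Fin N) ℝ)
    (hA : ∀ τ ∈ Icc (0 : ℝ) t, ∀ v : Fin N → ℝ,
      c₀ * μ * (∑ i, (v i) ^ 2) ≤ ∑ i, ∑ j, v i * A τ i j * v j)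
    (h𝒦cont : ∀ i j, ContinuousOn (fun τ => 𝒦 τ i j) (Icc (0 : ℝ) t))
    (h𝒦0 : 𝒦 0 = 1)
    (h𝒦deriv : ∀ τ ∈ Ioo (0 : ℝ) t, ∀ i j,
      HasDerivAt (fun s => 𝒦 s i j) ((-(𝒦 τ * A τ)) i j) τ) :
    ∀ τ ∈ Icc (0 : ℝ) t,
      frobNorm (𝒦 τ) ≤ Real.sqrt N * Real.exp (-(c₀ * μ * τ)) := by
  set f : ℝ → ℝ := fun τ => ∑ i, ∑ j, 𝒦 τ i j ^ 2
  have hf_cont : ContinuousOn f (Icc 0 t) :=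
    continuousOn_finsetSum _ fun i _ => continuousOn_finsetSum _ fun j _ => (h𝒦cont i j).pow 2
  have hf_deriv : ∀ τ ∈ Ioo 0 t, HasDerivAt f (2 * ∑ i, ∑ j, 𝒦 τ i j * -(𝒦 τ * A τ) i j) τ :=
    fun τ hτ => Matrix.hasDerivAt_sum_sq_apply (h𝒦deriv τ hτ)
  have hf_bound : ∀ τ ∈ Ioo 0 t,
      2 * ∑ i, ∑ j, 𝒦 τ i j * -(𝒦 τ * A τ) i j ≤ -(2 * (c₀ * μ)) * f τ := by
    intro τ hτ
    have := Matrix.mul_sum_sq_apply_le_of_coercive (hA τ (Ioo_subset_Icc_self hτ)) (𝒦 τ)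
    simp only [mul_neg, Finset.sum_neg_distrib]
    linarith
  have hf0 : f 0 = N := by simp only [f, h𝒦0, Matrix.sum_sq_one_apply, Fintype.card_fin]
  intro τ hτ
  have hfτ : f τ ≤ N * Real.exp (-(c₀ * μ * τ)) ^ 2 :=
    calc f τ ≤ f 0 * Real.exp (-(2 * (c₀ * μ)) * (τ - 0)) :=
          le_mul_exp_of_hasDerivAt_le_neg_mul hf_cont hf_deriv hf_bound τ hτ
      _ = N * Real.exp (-(c₀ * μ * τ)) ^ 2 := by
          rw [hf0, ← Real.exp_nat_mul]; congr 2; push_cast; ring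
  calc frobNorm (𝒦 τ) = Real.sqrt (f τ) := rfl
    _ ≤ Real.sqrt (N * Real.exp (-(c₀ * μ * τ)) ^ 2) := Real.sqrt_le_sqrt hfτ
    _ = Real.sqrt N * Real.exp (-(c₀ * μ * τ)) := by
        rw [Real.sqrt_mul (Nat.cast_nonneg N), Real.sqrt_sq (Real.exp_nonneg _)]

/-- Exponential decay of the solution of the backward matrix ODE
`𝒦' = −𝒦 A` with coercive coefficient `A` and initial value the identity. -/
theorem matrix_ode_exponential_decay
    (N : ℕ) (hN : 1 ≤ N) (c₀ μ t : ℝ) (hc₀ : 0 < c₀) (hμ : 0 < μ) (ht : 0 < t)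
    (A 𝒦 : ℝ → Matrix (Fin N) (Fin N) ℝ)
    (hA : ∀ τ ∈ Icc (0 : ℝ) t, ∀ v : Fin N → ℝ,
      c₀ * μ * (∑ i, (v i) ^ 2) ≤ ∑ i, ∑ j, v i * A τ i j * v j)
    (h𝒦cont : ∀ i j, ContinuousOn (fun τ => 𝒦 τ i j) (Icc (0 : ℝ) t))
    (h𝒦0 : 𝒦 0 = 1)
    (h𝒦deriv : ∀ τ ∈ Ioo (0 : ℝ) t, ∀ i j,
      HasDerivAt (fun s => 𝒦 s i j) ((-(𝒦 τ * A τ)) i j) τ) :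
    ∀ τ ∈ Icc (0 : ℝ) t,
      frobNorm (𝒦 τ) ≤ Real.sqrt N * Real.exp (-(c₀ * μ * τ)) :=
  matrix_ode_exponential_decay_general N c₀ μ t A 𝒦 hA h𝒦cont h𝒦0 h𝒦deriv
end

section
/- Let N ≥ 1 be an integer, c₀ > 0, μ > 0 and t > 0. Let A : ℝ → Matrix (Fin N) (Fin N) ℝ be such that for every τ ∈ [0, t], ⟨v, A(τ)·v⟩ ≥ c₀ μ ‖v‖² for every v ∈ ℝ^N, and let R : ℝ → Matrix (Fin N) (Fin N) ℝ be continuous on [0, t]. Suppose X : ℝ → Matrix (Fin N) (Fin N) ℝ is continuous on [0, t], X(0) = 0, and for every τ ∈ (0, t), X has derivative −X(τ)·A(τ) + R(τ) at τ. Then for every τ ∈ [0, t]: ‖X(τ)‖_F ≤ ∫₀^τ e^{−c₀ μ (τ−σ)} ‖R(σ)‖_F dσ. -/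
/-!
Write `g = ‖X‖_F²` and `c = c₀ μ`. Coercivity of `A` and Cauchy–Schwarz give
`g' ≤ -2c g + 2 √g ‖R‖_F`, formally `(√g)' ≤ -c √g + ‖R‖_F`, and the Duhamel integral solves
the corresponding equation, so the integrating factor `e^{cτ}` compares the two. As `√g` need
not be differentiable where `g` vanishes, the comparison is made for `√(g + ε²)`, which satisfies
`(√(g + ε²))' ≤ -c √(g + ε²) + ‖R‖_F + c ε`, against the Duhamel integral plus `ε`; then `ε → 0`.
-/

open Set

open Real

noncomputable def duhamelIntegral (c : ℝ) (ρ : ℝ → ℝ) (a τ : ℝ) : ℝ :=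
  ∫ s in a..τ, exp (-(c * (τ - s))) * ρ s

section Scalar

variable {a b c : ℝ}

theorem nonpos_of_hasDerivAt_add_mul_nonpos {φ φ' : ℝ → ℝ}
    (hφ : ContinuousOn φ (Icc a b)) (hφ' : ∀ x ∈ Ioo a b, HasDerivAt φ (φ' x) x)
    (hineq : ∀ x ∈ Ioo a b, φ' x + c * φ x ≤ 0) (ha : φ a ≤ 0) :
    ∀ x ∈ Icc a b, φ x ≤ 0 := by
  have hderiv : ∀ x ∈ Ioo a b,
      HasDerivAt (fun y => exp (c * y) * φ y) (exp (c * x) * (φ' x + c * φ x)) x := by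
    intro x hx
    exact (((hasDerivAt_id' x).const_mul c).exp.fun_mul (hφ' x hx)).congr_deriv (by ring)
  have hanti : AntitoneOn (fun y => exp (c * y) * φ y) (Icc a b) := by
    apply antitoneOn_of_deriv_nonpos (convex_Icc a b)
    · exact (continuous_exp.comp (continuous_const_mul c)).continuousOn.mul hφ
    · rw [interior_Icc]
      exact fun x hx => (hderiv x hx).differentiableAt.differentiableWithinAt
    · rw [interior_Icc]
      intro x hx
      rw [(hderiv x hx).deriv]
      exact mul_nonpos_of_nonneg_of_nonpos (exp_pos _).le (hineq x hx)
  intro x hx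
  have hmono : exp (c * x) * φ x ≤ exp (c * a) * φ a :=
    hanti (left_mem_Icc.mpr (hx.1.trans hx.2)) hx hx.1
  exact nonpos_of_mul_nonpos_right
    (hmono.trans (mul_nonpos_of_nonneg_of_nonpos (exp_pos _).le ha)) (exp_pos _)

theorem duhamelIntegral_eq (c : ℝ) (ρ : ℝ → ℝ) (a τ : ℝ) :
    duhamelIntegral c ρ a τ = exp (-(c * τ)) * ∫ s in a..τ, exp (c * s) * ρ s := by
  rw [duhamelIntegral, ← intervalIntegral.integral_const_mul]
  congr 1 with s
  rw [← mul_assoc, ← exp_add, mul_sub, neg_sub, sub_eq_neg_add]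

theorem duhamelIntegral_self (c : ℝ) (ρ : ℝ → ℝ) (a : ℝ) : duhamelIntegral c ρ a a = 0 :=
  intervalIntegral.integral_same

theorem continuousOn_duhamelIntegral {ρ : ℝ → ℝ} (hρ : ContinuousOn ρ (Icc a b)) :
    ContinuousOn (duhamelIntegral c ρ a) (Icc a b) := by
  rcases lt_or_ge b a with hba | hab
  · simp [Icc_eq_empty_of_lt hba]
  have hint : ContinuousOn (fun s => exp (c * s) * ρ s) (uIcc a b) := by
    rw [uIcc_of_le hab]
    exact (continuous_exp.comp (continuous_const_mul c)).continuousOn.mul hρ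
  have hprim := intervalIntegral.continuousOn_primitive_interval
    (hint.integrableOn_compact (μ := MeasureTheory.volume) isCompact_uIcc)
  rw [uIcc_of_le hab] at hprim
  simp_rw [funext (duhamelIntegral_eq c ρ a)]
  exact (continuous_exp.comp (continuous_const_mul c).neg).continuousOn.mul hprim

theorem hasDerivAt_duhamelIntegral {ρ : ℝ → ℝ} (hρ : ContinuousOn ρ (Icc a b)) {τ : ℝ}
    (hτ : τ ∈ Ioo a b) :
    HasDerivAt (duhamelIntegral c ρ a) (-c * duhamelIntegral c ρ a τ + ρ τ) τ := by
  have hcont : ContinuousOn (fun s => exp (c * s) * ρ s) (Icc a b) :=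
    (continuous_exp.comp (continuous_const_mul c)).continuousOn.mul hρ
  have hprim : HasDerivAt (fun u => ∫ s in a..u, exp (c * s) * ρ s) (exp (c * τ) * ρ τ) τ := by
    apply intervalIntegral.integral_hasDerivAt_right
    · apply ContinuousOn.intervalIntegrable
      rw [uIcc_of_le hτ.1.le]
      exact hcont.mono (Icc_subset_Icc_right hτ.2.le)
    · exact (hcont.mono Ioo_subset_Icc_self).stronglyMeasurableAtFilter isOpen_Ioo τ hτ
    · exact hcont.continuousAt (Icc_mem_nhds hτ.1 hτ.2)
  have hexp : HasDerivAt (fun u => exp (-(c * u))) (exp (-(c * τ)) * -c) τ := by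
    simpa using ((hasDerivAt_id τ).const_mul c).neg.exp
  have hprod := hexp.fun_mul hprim
  rw [← funext (duhamelIntegral_eq c ρ a)] at hprod
  refine hprod.congr_deriv ?_
  have hexp_inv : exp (-(c * τ)) * exp (c * τ) = 1 := by rw [← exp_add, neg_add_cancel, exp_zero]
  rw [duhamelIntegral_eq]
  linear_combination ρ τ * hexp_inv

theorem div_two_sqrt_add_sq_add_mul_le {g ρ d ε : ℝ} (hc : 0 ≤ c) (hg : 0 ≤ g) (hρ : 0 ≤ ρ)
    (hε : 0 < ε) (hd : d ≤ -2 * c * g + 2 * √g * ρ) :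
    d / (2 * √(g + ε ^ 2)) + c * √(g + ε ^ 2) ≤ ρ + c * ε := by
  set f := √(g + ε ^ 2)
  have hf_sq : f ^ 2 = g + ε ^ 2 := sq_sqrt (by positivity)
  have hε_le : ε ≤ f := (sqrt_sq hε.le).symm.trans_le (sqrt_le_sqrt (by linarith))
  have hg_le : √g ≤ f := sqrt_le_sqrt (by nlinarith)
  have hf : 0 < f := hε.trans_le hε_le
  rw [div_add' _ _ _ (by positivity), div_le_iff₀ (by positivity)]
  nlinarith [mul_le_mul_of_nonneg_right hg_le hρ,
    mul_le_mul_of_nonneg_left hε_le (mul_nonneg hc hε.le)]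

theorem sqrt_le_duhamelIntegral {g g' ρ : ℝ → ℝ} (hc : 0 ≤ c)
    (hg : ContinuousOn g (Icc a b)) (hg_nonneg : ∀ x ∈ Icc a b, 0 ≤ g x) (hga : g a = 0)
    (hg' : ∀ x ∈ Ioo a b, HasDerivAt g (g' x) x)
    (hρ : ContinuousOn ρ (Icc a b)) (hρ_nonneg : ∀ x ∈ Ioo a b, 0 ≤ ρ x)
    (hineq : ∀ x ∈ Ioo a b, g' x ≤ -2 * c * g x + 2 * √(g x) * ρ x) :
    ∀ x ∈ Icc a b, √(g x) ≤ duhamelIntegral c ρ a x := by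
  intro x hx
  refine le_of_forall_pos_le_add fun ε hε => ?_
  have hpos : ∀ y ∈ Icc a b, g y + ε ^ 2 ≠ 0 := fun y hy => by
    have := hg_nonneg y hy; positivity
  have hcompare := nonpos_of_hasDerivAt_add_mul_nonpos (c := c)
    (φ := fun y => √(g y + ε ^ 2) - (duhamelIntegral c ρ a y + ε))
    (φ' := fun y => g' y / (2 * √(g y + ε ^ 2)) - (-c * duhamelIntegral c ρ a y + ρ y))
    ((hg.add continuousOn_const).sqrt.sub
      ((continuousOn_duhamelIntegral hρ).add continuousOn_const))
    (fun y hy => (((hg' y hy).add_const _).sqrt (hpos y (Ioo_subset_Icc_self hy))).sub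
      ((hasDerivAt_duhamelIntegral hρ hy).add_const ε))
    (fun y hy => by
      have := div_two_sqrt_add_sq_add_mul_le hc (hg_nonneg y (Ioo_subset_Icc_self hy))
        (hρ_nonneg y hy) hε (hineq y hy)
      linarith)
    (by simp [hga, duhamelIntegral_self, sqrt_sq hε.le]) x hx
  calc √(g x) ≤ √(g x + ε ^ 2) := sqrt_le_sqrt (by nlinarith)
    _ ≤ duhamelIntegral c ρ a x + ε := sub_nonpos.mp hcompare

end Scalar

namespace Matrix

def IsCoerciveWith {n : Type*} [Fintype n] (c : ℝ) (A : Matrix n n ℝ) : Prop :=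
  ∀ v : n → ℝ, c * ∑ i, v i ^ 2 ≤ ∑ i, ∑ j, v i * A i j * v j

variable {m n : Type*} [Fintype m] [Fintype n]

theorem IsCoerciveWith.mul_sum_sq_le_sum_mul_mul {c : ℝ} {A : Matrix n n ℝ}
    (hA : IsCoerciveWith c A) (X : Matrix m n ℝ) :
    c * ∑ i, ∑ j, X i j ^ 2 ≤ ∑ i, ∑ j, X i j * (X * A) i j := by
  rw [Finset.mul_sum]
  refine Finset.sum_le_sum fun i _ => (hA (X i)).trans_eq ?_
  simp only [mul_apply, Finset.mul_sum]
  rw [Finset.sum_comm]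
  exact Finset.sum_congr rfl fun j _ => Finset.sum_congr rfl fun k _ => by ring

theorem continuousOn_sum_sq_entries {α : Type*} [TopologicalSpace α] {s : Set α}
    {X : α → Matrix m n ℝ} (hX : ∀ i j, ContinuousOn (fun τ => X τ i j) s) :
    ContinuousOn (fun τ => ∑ i, ∑ j, X τ i j ^ 2) s :=
  continuousOn_finsetSum _ fun i _ => continuousOn_finsetSum _ fun j _ => (hX i j).pow 2

theorem hasDerivAt_sum_sq_entries {X : ℝ → Matrix m n ℝ} {X' : Matrix m n ℝ} {τ : ℝ}
    (hX : ∀ i j, HasDerivAt (fun s => X s i j) (X' i j) τ) :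
    HasDerivAt (fun s => ∑ i, ∑ j, X s i j ^ 2) (2 * ∑ i, ∑ j, X τ i j * X' i j) τ := by
  simp only [Finset.mul_sum]
  exact HasDerivAt.fun_sum fun i _ => HasDerivAt.fun_sum fun j _ =>
    ((hX i j).pow 2).congr_deriv (by ring)

end Matrix

theorem sum_mul_le_frobNorm_mul_frobNorm {N : ℕ} (X R : Matrix (Fin N) (Fin N) ℝ) :
    ∑ i, ∑ j, X i j * R i j ≤ frobNorm X * frobNorm R := by
  simpa only [frobNorm, ← Fintype.sum_prod_type'] using
    sum_mul_le_sqrt_mul_sqrt Finset.univ (fun p : Fin N × Fin N => X p.1 p.2) (fun p => R p.1 p.2)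

theorem Matrix.IsCoerciveWith.two_mul_sum_mul_neg_mul_add_le {N : ℕ} {c : ℝ}
    {A : Matrix (Fin N) (Fin N) ℝ} (hA : IsCoerciveWith c A) (X R : Matrix (Fin N) (Fin N) ℝ) :
    2 * ∑ i, ∑ j, X i j * (-(X * A) + R) i j
      ≤ -2 * c * ∑ i, ∑ j, X i j ^ 2 + 2 * frobNorm X * frobNorm R := by
  simp only [Matrix.add_apply, Matrix.neg_apply, mul_add, mul_neg, Finset.sum_add_distrib,
    Finset.sum_neg_distrib]
  linarith [hA.mul_sum_sq_le_sum_mul_mul X, sum_mul_le_frobNorm_mul_frobNorm X R]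

theorem matrix_ode_duhamel_bound_general
    (N : ℕ) (c₀ μ t : ℝ) (hc₀ : 0 < c₀) (hμ : 0 < μ)
    (A R X : ℝ → Matrix (Fin N) (Fin N) ℝ)
    (hA : ∀ τ ∈ Icc (0 : ℝ) t, ∀ v : Fin N → ℝ,
      c₀ * μ * (∑ i, (v i) ^ 2) ≤ ∑ i, ∑ j, v i * A τ i j * v j)
    (hRcont : ∀ i j, ContinuousOn (fun τ => R τ i j) (Icc (0 : ℝ) t))
    (hXcont : ∀ i j, ContinuousOn (fun τ => X τ i j) (Icc (0 : ℝ) t))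
    (hX0 : X 0 = 0)
    (hXderiv : ∀ τ ∈ Ioo (0 : ℝ) t, ∀ i j,
      HasDerivAt (fun s => X s i j) ((-(X τ * A τ) + R τ) i j) τ) :
    ∀ τ ∈ Icc (0 : ℝ) t,
      frobNorm (X τ) ≤ ∫ s in (0 : ℝ)..τ, Real.exp (-(c₀ * μ * (τ - s))) * frobNorm (R s) :=
  sqrt_le_duhamelIntegral (mul_pos hc₀ hμ).le (Matrix.continuousOn_sum_sq_entries hXcont)
    (fun _ _ => by positivity) (by simp [hX0])
    (fun τ hτ => Matrix.hasDerivAt_sum_sq_entries (hXderiv τ hτ))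
    (Matrix.continuousOn_sum_sq_entries hRcont).sqrt (fun _ _ => sqrt_nonneg _)
    (fun τ hτ => Matrix.IsCoerciveWith.two_mul_sum_mul_neg_mul_add_le
      (hA τ (Ioo_subset_Icc_self hτ)) (X τ) (R τ))

/-- Gronwall/Duhamel-type bound for the inhomogeneous matrix ODE
`X' = −X A + R` with coercive coefficient `A` and zero initial value. -/
theorem matrix_ode_duhamel_bound
    (N : ℕ) (hN : 1 ≤ N) (c₀ μ t : ℝ) (hc₀ : 0 < c₀) (hμ : 0 < μ) (ht : 0 < t)
    (A R X : ℝ → Matrix (Fin N) (Fin N) ℝ)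
    (hA : ∀ τ ∈ Icc (0 : ℝ) t, ∀ v : Fin N → ℝ,
      c₀ * μ * (∑ i, (v i) ^ 2) ≤ ∑ i, ∑ j, v i * A τ i j * v j)
    (hRcont : ∀ i j, ContinuousOn (fun τ => R τ i j) (Icc (0 : ℝ) t))
    (hXcont : ∀ i j, ContinuousOn (fun τ => X τ i j) (Icc (0 : ℝ) t))
    (hX0 : X 0 = 0)
    (hXderiv : ∀ τ ∈ Ioo (0 : ℝ) t, ∀ i j,
      HasDerivAt (fun s => X s i j) ((-(X τ * A τ) + R τ) i j) τ) :
    ∀ τ ∈ Icc (0 : ℝ) t,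
      frobNorm (X τ) ≤ ∫ s in (0 : ℝ)..τ, Real.exp (-(c₀ * μ * (τ - s))) * frobNorm (R s) :=
  matrix_ode_duhamel_bound_general N c₀ μ t hc₀ hμ A R X hA hRcont hXcont hX0 hXderiv
end

section
/- Let 0 < γ₁ ≤ γ < 1. Let f : ℝ → ℝ be differentiable and 2π-periodic, and set H := sup_{x ≠ y} |f′(x) − f′(y)| / |x − y|^{γ₁}. For α ∈ ℝ with sin(α/2) ≠ 0 define the modified difference quotient Δ̃_α f(x) := (1/2)·cot(α/2)·(f(x) − f(x − α)). Then there exists a constant C depending only on γ and γ₁ such that for every x ∈ ℝ, every α ∈ (0, π), and every h ∈ [α/2, α/2 + 2π] with h ≠ α and sin(h/2) ≠ 0: |Δ̃_α f(x) − Δ̃_h f(x)| ≤ C H |α − h|^γ / α^{γ−γ₁}. -/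
/-!
Write `A = f'(x)` and `R(t) = f(x) - f(x - t) - t A`, so that
`Δ̃_t f(x) = A · (t/2) cot(t/2) + ½ cot(t/2) · R(t)` with `|R(t)| ≤ H |t|^(1+γ₁)`.
Since `f` is periodic, `f'` vanishes somewhere, so `|A| ≤ π^γ₁ H`.
If `|α - h| ≤ α/2`, the mean value theorem applies on `[α/2, 3α/2]`, where the `t`-derivative
of `Δ̃_t f(x)` is `O(H t^(γ₁-1))`. Otherwise `h` may be replaced by its representative modulo `2π`
in `[-π, π]`; both remainder terms are then `O(H |α - h|^γ₁)`, and the main terms differ by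
`O(H |α - h|)` because `t ↦ (t/2) cot(t/2)` is even and Lipschitz on `(0, π]`.
-/

open Set Real

lemma abs_sub_le_of_hasDerivAt_uIcc {g g' : ℝ → ℝ} {a b C : ℝ}
    (hg : ∀ t ∈ uIcc a b, HasDerivAt g (g' t) t) (hC : ∀ t ∈ uIcc a b, |g' t| ≤ C) :
    |g a - g b| ≤ C * |a - b| :=
  Convex.norm_image_sub_le_of_norm_hasDerivWithin_le (fun t ht => (hg t ht).hasDerivWithinAt)
    hC (convex_uIcc a b) right_mem_uIcc left_mem_uIcc

lemma div_five_le_sin {v : ℝ} (hv₀ : 0 ≤ v) (hv₁ : v ≤ 3 * π / 4) : v / 5 ≤ sin v := by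
  have hπ : 1 / 2 ≤ 2 / π := by
    rw [div_le_div_iff₀ two_pos pi_pos]; linarith [pi_le_four]
  rcases le_total v (π / 2) with hv | hv
  · nlinarith [mul_le_sin hv₀ hv]
  · have hsin := mul_le_sin (x := π - v) (by linarith) (by linarith)
    rw [sin_pi_sub] at hsin
    have hquarter : 2 / π * (π / 4) ≤ 2 / π * (π - v) := by gcongr; linarith
    rw [show 2 / π * (π / 4) = 1 / 2 by field_simp; norm_num] at hquarter
    linarith [pi_lt_d2]

lemma abs_div_five_le_abs_sin {v : ℝ} (hv : |v| ≤ 3 * π / 4) : |v| / 5 ≤ |sin v| := by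
  rcases abs_cases v with ⟨hv', hv₀⟩ | ⟨hv', hv₀⟩ <;> rw [hv'] at hv ⊢
  · exact (div_five_le_sin hv₀ hv).trans (le_abs_self _)
  · simpa only [sin_neg, abs_neg] using (div_five_le_sin (by linarith) hv).trans (le_abs_self _)

lemma abs_sin_sub_self_le {t : ℝ} (ht : 0 ≤ t) : |sin t - t| ≤ t ^ 3 / 6 := by
  rw [abs_sub_comm, abs_of_nonneg (by linarith [sin_le ht])]
  linarith [sin_ge_sub_cube ht]

lemma rpow_le_mul_rpow_of_le_mul {a b k e : ℝ} (ha : 0 ≤ a) (hb : 0 ≤ b) (hk : 1 ≤ k)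
    (he₀ : 0 ≤ e) (he₁ : e ≤ 1) (hab : a ≤ k * b) : a ^ e ≤ k * b ^ e :=
  calc a ^ e ≤ (k * b) ^ e := rpow_le_rpow ha hab he₀
    _ = k ^ e * b ^ e := mul_rpow (by linarith) hb
    _ ≤ k * b ^ e := by gcongr; exact rpow_le_self_of_one_le hk he₁

lemma le_mul_rpow_of_le {b L e : ℝ} (hb : 0 ≤ b) (hbL : b ≤ L) (hL : 1 ≤ L) (he₀ : 0 ≤ e)
    (he₁ : e ≤ 1) : b ≤ L * b ^ e := by
  rcases le_total b 1 with h | h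
  · nlinarith [self_le_rpow_of_le_one hb h he₁, rpow_nonneg hb e]
  · nlinarith [one_le_rpow h he₀]

lemma rpow_div_two_le {a e : ℝ} (ha : 0 ≤ a) (he : -1 ≤ e) : (a / 2) ^ e ≤ 2 * a ^ e := by
  have h2 : 2⁻¹ ≤ (2 : ℝ) ^ e := by
    simpa [rpow_neg_one] using rpow_le_rpow_of_exponent_le one_le_two he
  rw [div_rpow ha zero_le_two, div_le_iff₀ (by positivity)]
  nlinarith [rpow_nonneg ha e]

lemma one_le_four_mul_rpow {a e : ℝ} (ha : 0 < a) (haπ : a ≤ π) (he₀ : -1 ≤ e) (he₁ : e ≤ 0) :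
    1 ≤ 4 * a ^ e := by
  have hπe : π⁻¹ ≤ π ^ e := by
    simpa [rpow_neg_one] using rpow_le_rpow_of_exponent_le (by linarith [pi_gt_three]) he₀
  have hπ : 4⁻¹ ≤ π⁻¹ := inv_anti₀ pi_pos pi_le_four
  linarith [rpow_le_rpow_of_nonpos ha haπ he₁]

lemma rpow_sub_one_mul_le {α D γ γ₁ : ℝ} (hD : 0 < D) (hDα : D ≤ α) (hγ : γ ≤ 1) :
    α ^ (γ₁ - 1) * D ≤ D ^ γ / α ^ (γ - γ₁) := by
  have hα : 0 < α := hD.trans_le hDα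
  calc α ^ (γ₁ - 1) * D = D ^ γ * (α ^ (γ₁ - 1) * D ^ (1 - γ)) := by
        rw [mul_left_comm, ← rpow_add hD, add_sub_cancel, rpow_one]
    _ ≤ D ^ γ * (α ^ (γ₁ - 1) * α ^ (1 - γ)) := by gcongr
    _ = D ^ γ / α ^ (γ - γ₁) := by
        rw [← rpow_add hα, show γ₁ - 1 + (1 - γ) = -(γ - γ₁) by ring, rpow_neg hα.le,
          div_eq_mul_inv]

lemma rpow_le_two_mul_rpow_div {α D γ γ₁ : ℝ} (hα : 0 < α) (hαD : α ≤ 2 * D) (hγ₁γ : γ₁ ≤ γ)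
    (hγ : γ - γ₁ ≤ 1) : D ^ γ₁ ≤ 2 * (D ^ γ / α ^ (γ - γ₁)) := by
  have hD : 0 < D := by linarith
  have hαe := rpow_le_mul_rpow_of_le_mul hα.le hD.le one_le_two (by linarith) hγ hαD
  have hpos : 0 < α ^ (γ - γ₁) := rpow_pos_of_pos hα _
  rw [mul_div_assoc', le_div_iff₀ hpos, show D ^ γ = D ^ γ₁ * D ^ (γ - γ₁) by
    rw [← rpow_add hD, add_sub_cancel]]
  nlinarith [rpow_pos_of_pos hD γ₁]

noncomputable def halfCot (t : ℝ) : ℝ := 1 / 2 * (cos (t / 2) / sin (t / 2))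

lemma halfCot_periodic : Function.Periodic halfCot (2 * π) := by
  intro t
  simp only [halfCot, add_div, mul_div_cancel_left₀ π two_ne_zero, cos_add_pi, sin_add_pi,
    neg_div_neg_eq]

lemma halfCot_neg (t : ℝ) : halfCot (-t) = -halfCot t := by
  simp only [halfCot, neg_div, cos_neg, sin_neg, div_neg]; ring

lemma abs_mul_halfCot_abs (t : ℝ) : |t| * halfCot |t| = t * halfCot t := by
  rcases abs_cases t with ⟨h, -⟩ | ⟨h, -⟩ <;> rw [h]
  rw [halfCot_neg]; ring

lemma halfCot_eq_sin_div (t : ℝ) : halfCot t = sin t / (4 * sin (t / 2) ^ 2) := by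
  rcases eq_or_ne (sin (t / 2)) 0 with h | h
  · simp [halfCot, h]
  · have hsin := sin_two_mul (t / 2)
    rw [mul_div_cancel₀ t two_ne_zero] at hsin
    rw [halfCot, hsin]
    field_simp
    ring

lemma sq_div_hundred_le_sin_half_sq {t : ℝ} (ht : |t| ≤ 3 * π / 2) :
    t ^ 2 / 100 ≤ sin (t / 2) ^ 2 := by
  have := abs_div_five_le_abs_sin (v := t / 2) (by rw [abs_div, abs_two]; linarith)
  rw [abs_div, abs_two] at this
  nlinarith [sq_abs t, sq_abs (sin (t / 2)), abs_nonneg t]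

lemma abs_halfCot_le {t : ℝ} (ht₀ : t ≠ 0) (ht : |t| ≤ 3 * π / 2) : |halfCot t| ≤ 5 / |t| := by
  have h := abs_div_five_le_abs_sin (v := t / 2) (by rw [abs_div, abs_two]; linarith)
  rw [abs_div, abs_two] at h
  have ht' : 0 < |t| := abs_pos.mpr ht₀
  calc |halfCot t| = |cos (t / 2)| / (2 * |sin (t / 2)|) := by
        simp only [halfCot, abs_mul, abs_div]; norm_num; ring
    _ ≤ 1 / (2 * (|t| / 2 / 5)) :=
        div_le_div₀ zero_le_one (abs_cos_le_one _) (by positivity) (by linarith)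
    _ = 5 / |t| := by field_simp

lemma hasDerivAt_halfCot {t : ℝ} (ht : sin (t / 2) ≠ 0) :
    HasDerivAt halfCot (-1 / (4 * sin (t / 2) ^ 2)) t := by
  have hhalf : HasDerivAt (fun u : ℝ => u / 2) (1 / 2) t := (hasDerivAt_id t).div_const 2
  refine ((hhalf.cos.div hhalf.sin ht).const_mul (1 / 2)).congr_deriv ?_
  field_simp
  linear_combination (-4) * sin_sq_add_cos_sq (t / 2)

lemma hasDerivAt_mul_halfCot {t : ℝ} (ht : sin (t / 2) ≠ 0) :
    HasDerivAt (fun u => u * halfCot u) ((sin t - t) / (4 * sin (t / 2) ^ 2)) t := by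
  refine ((hasDerivAt_id' t).mul (hasDerivAt_halfCot ht)).congr_deriv ?_
  rw [halfCot_eq_sin_div]; ring

lemma abs_sin_sub_self_div_le {t : ℝ} (ht₀ : 0 < t) (ht : t ≤ 3 * π / 2) :
    |(sin t - t) / (4 * sin (t / 2) ^ 2)| ≤ 20 := by
  have hs := sq_div_hundred_le_sin_half_sq (t := t) (by rwa [abs_of_pos ht₀])
  have hpos : 0 < 4 * sin (t / 2) ^ 2 := by nlinarith [pow_pos ht₀ 2]
  rw [abs_div, abs_of_pos hpos, div_le_iff₀ hpos]
  nlinarith [abs_sin_sub_self_le ht₀.le, pi_lt_d2]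

lemma abs_mul_halfCot_sub_le {a b : ℝ} (ha : 0 < a) (hb : 0 < b) (ha' : a ≤ 3 * π / 2)
    (hb' : b ≤ 3 * π / 2) : |a * halfCot a - b * halfCot b| ≤ 20 * |a - b| := by
  have hmem : ∀ t ∈ uIcc a b, 0 < t ∧ t ≤ 3 * π / 2 := fun t ht =>
    ⟨lt_of_lt_of_le (lt_min ha hb) ht.1, ht.2.trans (max_le ha' hb')⟩
  refine abs_sub_le_of_hasDerivAt_uIcc (fun t ht => hasDerivAt_mul_halfCot ?_)
    (fun t ht => abs_sin_sub_self_div_le (hmem t ht).1 (hmem t ht).2)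
  exact (sin_pos_of_pos_of_lt_pi (by linarith [hmem t ht]) (by linarith [hmem t ht])).ne'

section HolderDerivative

variable {f : ℝ → ℝ} {H γ₁ : ℝ}

lemma Function.Periodic.abs_deriv_le {c : ℝ} (hper : Function.Periodic f c) (hc : 0 < c)
    (hf : Continuous f) (hH : 0 ≤ H) (hγ₁ : 0 ≤ γ₁)
    (hf' : ∀ y z, |deriv f y - deriv f z| ≤ H * |y - z| ^ γ₁) (y : ℝ) :
    |deriv f y| ≤ H * (c / 2) ^ γ₁ := by
  obtain ⟨z, -, hz⟩ := exists_deriv_eq_zero hc hf.continuousOn (by simpa using (hper 0).symm)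
  have hperd : Function.Periodic (deriv f) c := fun u => by
    rw [← deriv_comp_add_const]; exact congrArg (deriv · u) (funext hper)
  obtain ⟨z', ⟨hz₁, hz₂⟩, hz'⟩ := hperd.exists_mem_Ico hc z (y - c / 2)
  calc |deriv f y| = |deriv f y - deriv f z'| := by rw [← hz', hz, sub_zero]
    _ ≤ H * |y - z'| ^ γ₁ := hf' y z'
    _ ≤ H * (c / 2) ^ γ₁ := by
        gcongr
        rw [abs_le]; constructor <;> linarith

lemma abs_sub_sub_mul_deriv_le (hf : Differentiable ℝ f) (hH : 0 ≤ H) (hγ₁ : 0 ≤ γ₁)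
    (hf' : ∀ y z, |deriv f y - deriv f z| ≤ H * |y - z| ^ γ₁) (x t : ℝ) :
    |f x - f (x - t) - t * deriv f x| ≤ H * |t| ^ γ₁ * |t| := by
  have hg : ∀ u ∈ uIcc x (x - t),
      HasDerivAt (fun u => f u - deriv f x * u) (deriv f u - deriv f x) u := fun u _ =>
    ((hf u).hasDerivAt.sub ((hasDerivAt_id' u).const_mul _)).congr_deriv (by simp)
  have hbound : ∀ u ∈ uIcc x (x - t), |deriv f u - deriv f x| ≤ H * |t| ^ γ₁ := by
    intro u hu
    have hux : |u - x| ≤ |t| := by simpa using abs_sub_left_of_mem_uIcc hu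
    exact (hf' u x).trans (by gcongr)
  have := abs_sub_le_of_hasDerivAt_uIcc hg hbound
  rw [sub_sub_cancel] at this
  convert this using 2
  ring

end HolderDerivative

/-- The paper's `Δ̃_α f(x)`. -/
noncomputable def periodicDiffQuot (f : ℝ → ℝ) (α x : ℝ) : ℝ := halfCot α * (f x - f (x - α))

section PeriodicDiffQuot

variable {f : ℝ → ℝ} {H γ₁ : ℝ}

lemma periodicDiffQuot_sub_two_pi (hper : Function.Periodic f (2 * π)) (t x : ℝ) :
    periodicDiffQuot f (t - 2 * π) x = periodicDiffQuot f t x := by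
  rw [periodicDiffQuot, periodicDiffQuot, halfCot_periodic.sub_eq,
    show x - (t - 2 * π) = x - t + 2 * π by ring, hper]

lemma abs_periodicDiffQuot_sub_le (hf : Differentiable ℝ f) (hH : 0 ≤ H) (hγ₁ : 0 ≤ γ₁)
    (hf' : ∀ y z, |deriv f y - deriv f z| ≤ H * |y - z| ^ γ₁) {x t : ℝ} (ht₀ : t ≠ 0)
    (ht : |t| ≤ 3 * π / 2) :
    |periodicDiffQuot f t x - deriv f x * (t * halfCot t)| ≤ 5 * H * |t| ^ γ₁ := by
  have ht' : 0 < |t| := abs_pos.mpr ht₀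
  calc _ = |halfCot t| * |f x - f (x - t) - t * deriv f x| := by
        rw [← abs_mul, periodicDiffQuot]; ring_nf
    _ ≤ 5 / |t| * (H * |t| ^ γ₁ * |t|) := by
        gcongr
        exacts [abs_halfCot_le ht₀ ht, abs_sub_sub_mul_deriv_le hf hH hγ₁ hf' x t]
    _ = 5 * H * |t| ^ γ₁ := by field_simp

lemma hasDerivAt_periodicDiffQuot (hf : Differentiable ℝ f) (x : ℝ) {t : ℝ}
    (ht : sin (t / 2) ≠ 0) :
    HasDerivAt (periodicDiffQuot f · x)
      (-1 / (4 * sin (t / 2) ^ 2) * (f x - f (x - t)) + halfCot t * deriv f (x - t)) t := by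
  have hinc : HasDerivAt (fun u => f x - f (x - u)) (deriv f (x - t)) t :=
    (((hf (x - t)).hasDerivAt.comp t ((hasDerivAt_id' t).const_sub x)).const_sub (f x)).congr_deriv
      (by ring)
  exact (hasDerivAt_halfCot ht).mul hinc

lemma abs_deriv_periodicDiffQuot_le (hf : Differentiable ℝ f) (hH : 0 ≤ H) (hγ₁ : 0 ≤ γ₁)
    (hf' : ∀ y z, |deriv f y - deriv f z| ≤ H * |y - z| ^ γ₁) {x t : ℝ}
    (hA : |deriv f x| ≤ 4 * H) (ht₀ : 0 < t) (ht : t ≤ 3 * π / 2) :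
    |-1 / (4 * sin (t / 2) ^ 2) * (f x - f (x - t)) + halfCot t * deriv f (x - t)| ≤
      80 * H + 30 * H * t ^ (γ₁ - 1) := by
  have hsplit : -1 / (4 * sin (t / 2) ^ 2) * (f x - f (x - t)) + halfCot t * deriv f (x - t) =
      deriv f x * ((sin t - t) / (4 * sin (t / 2) ^ 2))
        + (t * deriv f x - (f x - f (x - t))) / (4 * sin (t / 2) ^ 2)
        + halfCot t * (deriv f (x - t) - deriv f x) := by
    rw [halfCot_eq_sin_div]; ring
  have hS : 4 * (t ^ 2 / 100) ≤ 4 * sin (t / 2) ^ 2 := by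
    gcongr; exact sq_div_hundred_le_sin_half_sq (by rwa [abs_of_pos ht₀])
  have h₁ : |deriv f x * ((sin t - t) / (4 * sin (t / 2) ^ 2))| ≤ 4 * H * 20 := by
    rw [abs_mul]
    exact mul_le_mul hA (abs_sin_sub_self_div_le ht₀ ht) (abs_nonneg _) (by positivity)
  have h₂ : |(t * deriv f x - (f x - f (x - t))) / (4 * sin (t / 2) ^ 2)| ≤
      25 * H * t ^ γ₁ / t := by
    have hrem := abs_sub_sub_mul_deriv_le hf hH hγ₁ hf' x t
    rw [abs_of_pos ht₀] at hrem
    rw [abs_div, abs_of_pos (lt_of_lt_of_le (by positivity) hS), abs_sub_comm]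
    calc _ ≤ H * t ^ γ₁ * t / (4 * (t ^ 2 / 100)) :=
          div_le_div₀ (by positivity) hrem (by positivity) hS
      _ = _ := by field_simp; ring
  have h₃ : |halfCot t * (deriv f (x - t) - deriv f x)| ≤ 5 * H * t ^ γ₁ / t := by
    have hdf : |deriv f (x - t) - deriv f x| ≤ H * t ^ γ₁ := by
      simpa [abs_of_pos ht₀] using hf' (x - t) x
    have hcot : |halfCot t| ≤ 5 / t := by
      simpa [abs_of_pos ht₀] using abs_halfCot_le ht₀.ne' (by rwa [abs_of_pos ht₀])
    calc _ ≤ 5 / t * (H * t ^ γ₁) := by rw [abs_mul]; gcongr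
      _ = _ := by ring
  rw [hsplit, rpow_sub_one ht₀.ne']
  calc _ ≤ _ := abs_add_three _ _ _
    _ ≤ 4 * H * 20 + 25 * H * t ^ γ₁ / t + 5 * H * t ^ γ₁ / t := add_le_add (add_le_add h₁ h₂) h₃
    _ = _ := by ring

lemma abs_periodicDiffQuot_sub_le_of_near (hf : Differentiable ℝ f) (hH : 0 ≤ H) (hγ₁ : 0 ≤ γ₁)
    (hγ₁' : γ₁ ≤ 1) (hf' : ∀ y z, |deriv f y - deriv f z| ≤ H * |y - z| ^ γ₁) {x α h : ℝ}
    (hA : |deriv f x| ≤ 4 * H) (hα₀ : 0 < α) (hαπ : α < π) (hnear : |α - h| ≤ α / 2) :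
    |periodicDiffQuot f α x - periodicDiffQuot f h x| ≤ 380 * H * α ^ (γ₁ - 1) * |α - h| := by
  obtain ⟨hh₁, hh₂⟩ := abs_le.mp hnear
  have hmem : ∀ t ∈ uIcc α h, α / 2 ≤ t ∧ t ≤ 3 * π / 2 := fun t ht =>
    ⟨(le_min (by linarith) (by linarith)).trans ht.1,
      ht.2.trans (max_le (by linarith) (by linarith))⟩
  refine abs_sub_le_of_hasDerivAt_uIcc (fun t ht => hasDerivAt_periodicDiffQuot hf x ?_)
    (fun t ht => ?_)
  · obtain ⟨ht₁, ht₂⟩ := hmem t ht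
    exact (sin_pos_of_pos_of_lt_pi (by linarith) (by linarith)).ne'
  · obtain ⟨ht₁, ht₂⟩ := hmem t ht
    have hpow : t ^ (γ₁ - 1) ≤ 2 * α ^ (γ₁ - 1) :=
      (rpow_le_rpow_of_nonpos (by linarith) ht₁ (by linarith)).trans
        (rpow_div_two_le hα₀.le (by linarith))
    have hone : 1 ≤ 4 * α ^ (γ₁ - 1) :=
      one_le_four_mul_rpow hα₀ hαπ.le (by linarith) (by linarith)
    refine (abs_deriv_periodicDiffQuot_le hf hH hγ₁ hf' hA (by linarith) ht₂).trans ?_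
    nlinarith [mul_le_mul_of_nonneg_left hpow hH, mul_le_mul_of_nonneg_left hone hH]

lemma exists_abs_le_pi_of_far {α h : ℝ} (hα₀ : 0 < α) (hαπ : α < π) (hh₁ : α / 2 ≤ h)
    (hh₂ : h ≤ α / 2 + 2 * π) (hh : h ≠ 2 * π) (hfar : α / 2 < |α - h|) :
    ∃ s, (s = h ∨ s = h - 2 * π) ∧ s ≠ 0 ∧ |s| ≤ π ∧ |α - (|s|)| ≤ |α - h| ∧
      |s| ≤ 3 * |α - h| := by
  by_cases hhπ : h ≤ π
  · have h₀ : 0 < h := by linarith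
    refine ⟨h, Or.inl rfl, h₀.ne', ?_, ?_, ?_⟩ <;> rw [abs_of_pos h₀]
    · exact hhπ
    · linarith [le_abs_self (α - h), neg_abs_le (α - h)]
  · have hD : |α - h| = h - α := by rw [abs_sub_comm, abs_of_pos (by linarith)]
    rw [hD] at hfar ⊢
    refine ⟨h - 2 * π, Or.inr rfl, sub_ne_zero.mpr hh, ?_⟩
    rcases abs_cases (h - 2 * π) with ⟨hs, hs₀⟩ | ⟨hs, hs₀⟩ <;> rw [hs] <;>
      refine ⟨by linarith, abs_le.mpr ⟨by linarith, by linarith⟩, by linarith⟩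

lemma abs_periodicDiffQuot_sub_le_of_far (hf : Differentiable ℝ f)
    (hper : Function.Periodic f (2 * π)) (hH : 0 ≤ H) (hγ₁ : 0 ≤ γ₁) (hγ₁' : γ₁ ≤ 1)
    (hf' : ∀ y z, |deriv f y - deriv f z| ≤ H * |y - z| ^ γ₁) {x α h : ℝ}
    (hA : |deriv f x| ≤ 4 * H) (hα₀ : 0 < α) (hαπ : α < π) (hh₁ : α / 2 ≤ h)
    (hh₂ : h ≤ α / 2 + 2 * π) (hsinh : sin (h / 2) ≠ 0) (hfar : α / 2 < |α - h|) :
    |periodicDiffQuot f α x - periodicDiffQuot f h x| ≤ 585 * H * |α - h| ^ γ₁ := by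
  have hh : h ≠ 2 * π := by rintro rfl; simp at hsinh
  obtain ⟨s, hs, hs₀, hsπ, hαs, hsD⟩ := exists_abs_le_pi_of_far hα₀ hαπ hh₁ hh₂ hh hfar
  have hqs : periodicDiffQuot f h x = periodicDiffQuot f s x := by
    rcases hs with rfl | rfl
    exacts [rfl, (periodicDiffQuot_sub_two_pi hper h x).symm]
  have hD : |α - h| ≤ 7 := abs_le.mpr ⟨by linarith [pi_lt_d2], by linarith [pi_lt_d2]⟩
  have hqα := abs_periodicDiffQuot_sub_le hf hH hγ₁ hf' (x := x) hα₀.ne'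
    (by rw [abs_of_pos hα₀]; linarith)
  rw [abs_of_pos hα₀] at hqα
  have hqs' := abs_periodicDiffQuot_sub_le hf hH hγ₁ hf' (x := x) hs₀ (by linarith)
  have hlin : |deriv f x * (α * halfCot α - s * halfCot s)| ≤ 4 * H * (20 * |α - h|) := by
    have hM := abs_mul_halfCot_sub_le hα₀ (abs_pos.mpr hs₀) (by linarith) (by linarith)
    rw [abs_mul_halfCot_abs] at hM
    rw [abs_mul]
    exact mul_le_mul hA (hM.trans (by gcongr)) (abs_nonneg _) (by positivity)
  have e₁ := rpow_le_mul_rpow_of_le_mul hα₀.le (abs_nonneg _) one_le_two hγ₁ hγ₁'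
    (show α ≤ 2 * |α - h| by linarith)
  have e₂ := rpow_le_mul_rpow_of_le_mul (abs_nonneg s) (abs_nonneg _) (by norm_num) hγ₁ hγ₁' hsD
  have e₃ := le_mul_rpow_of_le (abs_nonneg _) hD (by norm_num) hγ₁ hγ₁'
  rw [hqs]
  calc _ = |(periodicDiffQuot f α x - deriv f x * (α * halfCot α))
        + deriv f x * (α * halfCot α - s * halfCot s)
        + (deriv f x * (s * halfCot s) - periodicDiffQuot f s x)| := by ring_nf
    _ ≤ 5 * H * α ^ γ₁ + 4 * H * (20 * |α - h|) + 5 * H * |s| ^ γ₁ := by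
        refine (abs_add_three _ _ _).trans (add_le_add (add_le_add hqα hlin) ?_)
        rwa [abs_sub_comm]
    _ ≤ 585 * H * |α - h| ^ γ₁ := by
        nlinarith [mul_le_mul_of_nonneg_left e₁ hH, mul_le_mul_of_nonneg_left e₂ hH,
          mul_le_mul_of_nonneg_left e₃ hH]

end PeriodicDiffQuot

/-- Hölder continuity in `α` of the periodic modified difference quotient
`Δ̃_α f(x) = (1/2)cot(α/2)(f(x) − f(x−α))`. -/
theorem periodic_difference_quotient_holder
    (γ γ₁ : ℝ) (h1 : 0 < γ₁) (h2 : γ₁ ≤ γ) (h3 : γ < 1) :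
    ∃ C : ℝ, 0 < C ∧
      ∀ (f : ℝ → ℝ) (H : ℝ),
        Differentiable ℝ f →
        Function.Periodic f (2 * Real.pi) →
        (∀ x y : ℝ, x ≠ y → |deriv f x - deriv f y| ≤ H * |x - y| ^ γ₁) →
        ∀ x : ℝ, ∀ α ∈ Ioo (0 : ℝ) Real.pi,
          ∀ h ∈ Icc (α / 2) (α / 2 + 2 * Real.pi), h ≠ α → Real.sin (h / 2) ≠ 0 →
            |(1 / 2) * (Real.cos (α / 2) / Real.sin (α / 2)) * (f x - f (x - α)) -
                (1 / 2) * (Real.cos (h / 2) / Real.sin (h / 2)) * (f x - f (x - h))| ≤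
              C * H * |α - h| ^ γ / α ^ (γ - γ₁) := by
  refine ⟨1170, by norm_num, ?_⟩
  intro f H hf hper hHol x α ⟨hα₀, hαπ⟩ h ⟨hh₁, hh₂⟩ hne hsinh
  have hγ₁' : γ₁ ≤ 1 := by linarith
  have hf' : ∀ y z, |deriv f y - deriv f z| ≤ H * |y - z| ^ γ₁ := fun y z =>
    (eq_or_ne y z).elim (fun e => by simp [e, zero_rpow h1.ne']) (hHol y z)
  have hH : 0 ≤ H := by simpa using (abs_nonneg _).trans (hHol 1 0 one_ne_zero)
  have hA : |deriv f x| ≤ 4 * H := by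
    refine (hper.abs_deriv_le two_pi_pos hf.continuous hH h1.le hf' x).trans ?_
    rw [mul_div_cancel_left₀ π two_ne_zero, mul_comm 4]
    gcongr
    exact (rpow_le_self_of_one_le (by linarith [pi_gt_three]) hγ₁').trans pi_le_four
  have hD : 0 < |α - h| := abs_pos.mpr (sub_ne_zero.mpr hne.symm)
  show |periodicDiffQuot f α x - periodicDiffQuot f h x| ≤ _
  rw [mul_div_assoc]
  rcases le_or_gt |α - h| (α / 2) with hnear | hfar
  · calc _ ≤ 380 * H * (α ^ (γ₁ - 1) * |α - h|) := by
          simpa only [mul_assoc] using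
            abs_periodicDiffQuot_sub_le_of_near hf hH h1.le hγ₁' hf' hA hα₀ hαπ hnear
      _ ≤ 1170 * H * (|α - h| ^ γ / α ^ (γ - γ₁)) := by
          gcongr
          · norm_num
          · exact rpow_sub_one_mul_le hD (by linarith) h3.le
  · calc _ ≤ 585 * H * |α - h| ^ γ₁ :=
          abs_periodicDiffQuot_sub_le_of_far hf hper hH h1.le hγ₁' hf' hA hα₀ hαπ hh₁ hh₂ hsinh hfar
      _ ≤ 585 * H * (2 * (|α - h| ^ γ / α ^ (γ - γ₁))) := by
          gcongr
          exact rpow_le_two_mul_rpow_div hα₀ (by linarith) h2 (by linarith)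
      _ = _ := by ring
end

section
/- Let d, m ≥ 1 be integers. Let f : ℝ → ℝ be (m+2)-times continuously differentiable with Σ_{k=1}^{m+2} ‖f^{(k)}‖_{L^∞} ≤ 1, and let g : ℝ^d → ℝ be m-times continuously differentiable with ‖∇^j g‖_{L^∞} < ∞ for all 1 ≤ j ≤ m. Then there is a constant C depending only on d and m such that ‖∇^m (f ∘ g)‖_{L^∞} ≤ C (‖∇ g‖_{L^∞}^m + ‖∇^m g‖_{L^∞}). -/
/-!
By Faà di Bruno, `‖∇^m (f ∘ g) x‖ ≤ m! D^m` as soon as the first `m` derivatives of `f` are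
bounded by `1` and `‖∇^j g x‖ ≤ D^j` for `1 ≤ j ≤ m`. To produce such a `D` from the two extreme
derivatives only, apply the Landau–Kolmogorov inequality `‖Ψ'‖² ≤ 8 ‖Ψ‖ ‖Ψ''‖` to `Ψ = ∇^j g`:
the sup norms `b_j` of `∇^j g` satisfy `b_{j+1}² ≤ 9 b_j b_{j+2}`, and a discrete maximum principle
for such log-convex sequences gives `b_j ≤ 3^((j-1)(m-j)) D^j` once `b_1 ≤ D` and `b_m ≤ D^m`.
Take `D^m = M_1^m + M_m`.
-/

open scoped NNReal Nat

lemma sq_le_of_forall_pos_mul_le {x A B : ℝ} (hx : 0 ≤ x) (hA : 0 ≤ A) (hB : 0 ≤ B)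
    (h : ∀ t, 0 < t → t * x ≤ A + B * t ^ 2) : x ^ 2 ≤ 4 * A * B := by
  rcases hx.eq_or_lt with rfl | hx
  · rw [zero_pow two_ne_zero]; positivity
  rcases hB.eq_or_lt with rfl | hB
  · have := h ((A + 1) / x) (by positivity)
    rw [div_mul_cancel₀ _ hx.ne'] at this
    linarith
  · have := h (x / (2 * B)) (by positivity)
    field_simp at this
    nlinarith

lemma le_max_endpoints_of_sq_le_mul {w : ℕ → ℝ} (hw0 : ∀ j, 0 ≤ w j) {m : ℕ}
    (hw : ∀ j, 1 ≤ j → j + 2 ≤ m → w (j + 1) ^ 2 ≤ w j * w (j + 2)) :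
    ∀ j, 1 ≤ j → j ≤ m → w j ≤ max (w 1) (w m) := by
  induction m with
  | zero => intro j h1 h0; omega
  | succ m ih =>
    intro j hj1 hjm
    rcases hjm.eq_or_lt with rfl | hjm
    · exact le_max_right _ _
    have ih := ih (fun i hi1 him => hw i hi1 (by omega))
    refine (ih j hj1 (by omega)).trans (max_le (le_max_left _ _) ?_)
    rcases le_or_gt (w m) (w 1) with hm1 | hm1
    · exact hm1.trans (le_max_left _ _)
    have hm2 : 2 ≤ m := by
      by_contra!
      obtain rfl : m = 1 := by omega
      exact lt_irrefl _ hm1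
    have hprev : w (m - 1) ≤ w m :=
      (ih (m - 1) (by omega) (by omega)).trans (max_eq_right hm1.le).le
    have hconv := hw (m - 1) (by omega) (by omega)
    rw [show m - 1 + 1 = m by omega, show m - 1 + 2 = m + 1 by omega] at hconv
    have hpos : 0 < w m := (hw0 1).trans_lt hm1
    refine (le_max_right _ _).trans' ?_
    nlinarith [hw0 (m + 1)]

lemma sub_one_mul_sub_second_difference {j m : ℕ} (h1 : 1 ≤ j) (hm : j + 2 ≤ m) :
    (j + 1 - 1) * (m - (j + 1)) * 2 = (j - 1) * (m - j) + (j + 2 - 1) * (m - (j + 2)) + 2 := by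
  obtain ⟨i, rfl⟩ : ∃ i, j = i + 1 := ⟨j - 1, by omega⟩
  obtain ⟨u, rfl⟩ : ∃ u, m = i + 3 + u := ⟨m - (i + 3), by omega⟩
  rw [show i + 3 + u - (i + 1 + 1) = u + 1 by omega, show i + 3 + u - (i + 1) = u + 2 by omega,
    show i + 3 + u - (i + 1 + 2) = u by omega, show i + 1 + 1 - 1 = i + 1 by omega,
    show i + 1 - 1 = i by omega, show i + 1 + 2 - 1 = i + 2 by omega]
  ring

lemma eq_zero_of_sq_le_mul_of_eq_zero {a : ℕ → ℝ} {m : ℕ} {K : ℝ}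
    (ha : ∀ j, 1 ≤ j → j + 2 ≤ m → a (j + 1) ^ 2 ≤ K * a j * a (j + 2)) (h1 : a 1 = 0)
    {j : ℕ} (hj1 : 1 ≤ j) (hjm : j < m) : a j = 0 := by
  induction j, hj1 using Nat.le_induction with
  | base => exact h1
  | succ j hj ih =>
    have h := ha j hj (by omega)
    rw [ih (by omega), mul_zero, zero_mul] at h
    exact pow_eq_zero_iff two_ne_zero |>.1 (le_antisymm h (sq_nonneg _))

lemma le_pow_mul_pow_of_sq_le_mul {a : ℕ → ℝ} (ha0 : ∀ j, 0 ≤ a j) {m : ℕ} {K D : ℝ}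
    (hK : 0 < K) (hD : 0 ≤ D)
    (ha : ∀ j, 1 ≤ j → j + 2 ≤ m → a (j + 1) ^ 2 ≤ K ^ 2 * a j * a (j + 2))
    (h1 : a 1 ≤ D) (hm : a m ≤ D ^ m) {j : ℕ} (hj1 : 1 ≤ j) (hjm : j ≤ m) :
    a j ≤ K ^ ((j - 1) * (m - j)) * D ^ j := by
  rcases hD.eq_or_lt with rfl | hD
  · rw [zero_pow (by omega), mul_zero]
    rcases hjm.eq_or_lt with rfl | hjm
    · simpa [zero_pow (by omega : j ≠ 0)] using hm
    · exact (eq_zero_of_sq_le_mul_of_eq_zero ha (le_antisymm h1 (ha0 1)) hj1 hjm).le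
  -- normalise by the extremal sequence `r`: `r (i + 1) ^ 2 = K ^ 2 * r i * r (i + 2)`, `r 1 = D`,
  -- `r m = D ^ m`
  set r : ℕ → ℝ := fun j => K ^ ((j - 1) * (m - j)) * D ^ j with hr
  have hr0 : ∀ j, 0 < r j := fun j => by positivity
  have hconv : ∀ i, 1 ≤ i → i + 2 ≤ m →
      (a (i + 1) / r (i + 1)) ^ 2 ≤ a i / r i * (a (i + 2) / r (i + 2)) := by
    intro i hi1 him
    have hrr : 0 < r i * r (i + 2) := mul_pos (hr0 i) (hr0 (i + 2))
    have hri : r (i + 1) ^ 2 = K ^ 2 * r i * r (i + 2) := by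
      simp only [hr]
      rw [mul_pow, ← pow_mul, ← pow_mul, sub_one_mul_sub_second_difference hi1 him]
      ring
    rw [div_pow, hri, mul_assoc, div_mul_div_comm, div_le_div_iff₀ (by positivity) hrr]
    calc a (i + 1) ^ 2 * (r i * r (i + 2)) ≤ K ^ 2 * a i * a (i + 2) * (r i * r (i + 2)) :=
          mul_le_mul_of_nonneg_right (ha i hi1 him) hrr.le
      _ = _ := by ring
  have hw := le_max_endpoints_of_sq_le_mul (fun j => div_nonneg (ha0 j) (hr0 j).le) hconv j hj1 hjm
  have hr1 : r 1 = D := by simp [hr]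
  have hrm : r m = D ^ m := by simp [hr]
  rw [div_le_iff₀ (hr0 j), hr1, hrm] at hw
  refine hw.trans (mul_le_of_le_one_left (hr0 j).le (max_le ?_ ?_))
  · exact div_le_one_of_le₀ h1 hD.le
  · exact div_le_one_of_le₀ hm (by positivity)

variable {E F G : Type*} [NormedAddCommGroup E] [NormedSpace ℝ E] [NormedAddCommGroup F]
  [NormedSpace ℝ F] [NormedAddCommGroup G] [NormedSpace ℝ G]

section LandauKolmogorov

variable {Ψ : E → F} {A : ℝ} {K : ℝ≥0} (hΨ : Differentiable ℝ Ψ) (hA : ∀ y, ‖Ψ y‖ ≤ A)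
  (hK : LipschitzWith K (fderiv ℝ Ψ))
include hΨ hA hK

lemma norm_fderiv_apply_le_of_bounds (x v : E) : ‖fderiv ℝ Ψ x v‖ ≤ 2 * A + K * ‖v‖ ^ 2 := by
  have hlip : ∀ z ∈ Metric.closedBall x ‖v‖, ‖fderiv ℝ Ψ z - fderiv ℝ Ψ x‖ ≤ K * ‖v‖ := by
    intro z hz
    rw [← dist_eq_norm]
    exact (hK.dist_le_mul z x).trans (by gcongr; exact hz)
  have htaylor : ‖Ψ (x + v) - Ψ x - fderiv ℝ Ψ x v‖ ≤ K * ‖v‖ * ‖v‖ := by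
    simpa using (convex_closedBall x ‖v‖).norm_image_sub_le_of_norm_fderiv_le'
      (fun y _ => hΨ y) hlip (Metric.mem_closedBall_self (norm_nonneg v))
      (by simp : x + v ∈ Metric.closedBall x ‖v‖)
  calc ‖fderiv ℝ Ψ x v‖
      = ‖(Ψ (x + v) - Ψ x) - (Ψ (x + v) - Ψ x - fderiv ℝ Ψ x v)‖ := by abel_nf
    _ ≤ ‖Ψ (x + v)‖ + ‖Ψ x‖ + K * ‖v‖ * ‖v‖ :=
        (norm_sub_le _ _).trans (add_le_add (norm_sub_le _ _) htaylor)
    _ ≤ 2 * A + K * ‖v‖ ^ 2 := by nlinarith [hA (x + v), hA x]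

lemma norm_fderiv_le_sqrt_of_bounds (x : E) : ‖fderiv ℝ Ψ x‖ ≤ √(8 * A * K) := by
  refine ContinuousLinearMap.opNorm_le_of_unit_norm (Real.sqrt_nonneg _) fun u hu => ?_
  have hA0 : 0 ≤ A := (norm_nonneg _).trans (hA x)
  rw [Real.le_sqrt (norm_nonneg _) (by positivity)]
  refine le_of_le_of_eq (sq_le_of_forall_pos_mul_le (norm_nonneg _) (by positivity : 0 ≤ 2 * A)
    K.coe_nonneg fun t ht => ?_) (by ring)
  simpa [norm_smul, hu, abs_of_pos ht] using norm_fderiv_apply_le_of_bounds hΨ hA hK x (t • u)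

end LandauKolmogorov

lemma norm_iteratedFDeriv_succ_le_sqrt {g : E → F} {j : ℕ} {A B : ℝ} (hg : ContDiff ℝ (j + 2) g)
    (hA : ∀ y, ‖iteratedFDeriv ℝ j g y‖ ≤ A) (hB : ∀ y, ‖iteratedFDeriv ℝ (j + 2) g y‖ ≤ B)
    (x : E) : ‖iteratedFDeriv ℝ (j + 1) g x‖ ≤ √(8 * A * B) := by
  have hB0 : 0 ≤ B := (norm_nonneg _).trans (hB x)
  have hlip : LipschitzWith B.toNNReal (iteratedFDeriv ℝ (j + 1) g) :=
    lipschitzWith_of_nnnorm_fderiv_le (hg.differentiable_iteratedFDeriv (by norm_cast; omega))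
      fun y => by rw [← NNReal.coe_le_coe, coe_nnnorm, norm_fderiv_iteratedFDeriv,
        Real.coe_toNNReal _ hB0]; exact hB y
  rw [← norm_fderiv_iteratedFDeriv, ← Real.coe_toNNReal _ hB0]
  refine norm_fderiv_le_sqrt_of_bounds
    (hg.differentiable_iteratedFDeriv (by norm_cast; omega)) hA ?_ x
  rw [fderiv_iteratedFDeriv]
  simpa using (LinearIsometryEquiv.lipschitz _).comp hlip

theorem norm_iteratedFDeriv_le_of_bounds {g : E → F} {m : ℕ} (hg : ContDiff ℝ m g)
    (hbdd : ∀ j, 1 ≤ j → j ≤ m → BddAbove (Set.range fun y => ‖iteratedFDeriv ℝ j g y‖))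
    {D : ℝ} (hD : 0 ≤ D) (h1 : ∀ y, ‖iteratedFDeriv ℝ 1 g y‖ ≤ D)
    (hm : ∀ y, ‖iteratedFDeriv ℝ m g y‖ ≤ D ^ m) {j : ℕ} (hj1 : 1 ≤ j) (hjm : j ≤ m) (x : E) :
    ‖iteratedFDeriv ℝ j g x‖ ≤ (3 ^ m * D) ^ j := by
  set b : ℕ → ℝ := fun i => ⨆ y, ‖iteratedFDeriv ℝ i g y‖
  have hb0 : ∀ i, 0 ≤ b i := fun i => Real.iSup_nonneg fun y => norm_nonneg _
  have hle : ∀ i, 1 ≤ i → i ≤ m → ∀ y, ‖iteratedFDeriv ℝ i g y‖ ≤ b i :=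
    fun i hi1 him y => le_ciSup (hbdd i hi1 him) y
  have hsq : ∀ i, 1 ≤ i → i + 2 ≤ m → b (i + 1) ^ 2 ≤ 3 ^ 2 * b i * b (i + 2) := by
    intro i hi1 him
    have hsqrt : b (i + 1) ≤ √(8 * b i * b (i + 2)) :=
      ciSup_le <| norm_iteratedFDeriv_succ_le_sqrt (hg.of_le (by exact_mod_cast him))
        (hle i hi1 (by omega)) (hle (i + 2) (by omega) him)
    rw [Real.le_sqrt (hb0 _) (by have := hb0 i; have := hb0 (i + 2); positivity)] at hsqrt
    nlinarith [mul_nonneg (hb0 i) (hb0 (i + 2))]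
  calc ‖iteratedFDeriv ℝ j g x‖ ≤ 3 ^ ((j - 1) * (m - j)) * D ^ j :=
        (hle j hj1 hjm x).trans <| le_pow_mul_pow_of_sq_le_mul hb0 (by norm_num) hD hsq
          (ciSup_le h1) (ciSup_le hm) hj1 hjm
    _ ≤ (3 ^ m) ^ j * D ^ j := by
        rw [← pow_mul]
        gcongr ?_ * _
        exact pow_le_pow_right₀ (by norm_num : (1 : ℝ) ≤ 3)
          ((Nat.mul_le_mul (j.sub_le 1) (m.sub_le j)).trans_eq (mul_comm j m))
    _ = (3 ^ m * D) ^ j := (mul_pow _ _ _).symm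

lemma iteratedFDeriv_sub_const {h : F → G} {n : ℕ} (hn : n ≠ 0) (hh : ContDiff ℝ n h) (c : G) :
    iteratedFDeriv ℝ n (fun y => h y - c) = iteratedFDeriv ℝ n h := by
  ext1 y
  rw [fun_iteratedFDeriv_sub_apply hh.contDiffAt contDiffAt_const, iteratedFDeriv_const_of_ne hn,
    Pi.zero_apply, sub_zero]

theorem norm_iteratedFDeriv_comp_le_of_le_pow {f : F → G} {g : E → F} {m : ℕ} (hm : 1 ≤ m)
    (hf : ContDiff ℝ m f) (hg : ContDiff ℝ m g) {x : E} {C D : ℝ}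
    (hC : ∀ i, 1 ≤ i → i ≤ m → ‖iteratedFDeriv ℝ i f (g x)‖ ≤ C)
    (hD : ∀ i, 1 ≤ i → i ≤ m → ‖iteratedFDeriv ℝ i g x‖ ≤ D ^ i) :
    ‖iteratedFDeriv ℝ m (f ∘ g) x‖ ≤ m ! * C * D ^ m := by
  -- subtracting the constant `f (g x)` makes the zeroth derivative at `g x` vanish
  calc ‖iteratedFDeriv ℝ m (f ∘ g) x‖
      = ‖iteratedFDeriv ℝ m ((fun y => f y - f (g x)) ∘ g) x‖ := by
        rw [Function.comp_def, Function.comp_def,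
          iteratedFDeriv_sub_const (h := fun y => f (g y)) (by omega) (hf.comp hg)]
    _ ≤ m ! * C * D ^ m := by
      refine norm_iteratedFDeriv_comp_le (hf.sub contDiff_const) hg le_rfl x (fun i hi => ?_) hD
      rcases Nat.eq_zero_or_pos i with rfl | hi0
      · simpa using (norm_nonneg _).trans (hC 1 le_rfl hm)
      · rw [iteratedFDeriv_sub_const hi0.ne' (hf.of_le (by exact_mod_cast hi))]
        exact hC i hi0 hi

theorem composition_derivative_bound_general
    (d m : ℕ) (hm : 1 ≤ m) :
    ∃ C : ℝ, 0 < C ∧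
      ∀ (f : ℝ → ℝ) (c : ℕ → ℝ),
        ContDiff ℝ (m + 2) f →
        (∀ k ∈ Finset.Icc 1 (m + 2), ∀ x : ℝ, |iteratedDeriv k f x| ≤ c k) →
        (∑ k ∈ Finset.Icc 1 (m + 2), c k) ≤ 1 →
        ∀ (g : EuclideanSpace ℝ (Fin d) → ℝ) (M : ℕ → ℝ),
          ContDiff ℝ m g →
          (∀ j ∈ Finset.Icc 1 m, ∀ x, ‖iteratedFDeriv ℝ j g x‖ ≤ M j) →
          ∀ x, ‖iteratedFDeriv ℝ m (fun y => f (g y)) x‖ ≤ C * (M 1 ^ m + M m) := by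
  refine ⟨m ! * 3 ^ (m * m), by positivity, fun f c hf hfc hsum g M hg hgM x => ?_⟩
  have hgM' : ∀ j, 1 ≤ j → j ≤ m → ∀ y, ‖iteratedFDeriv ℝ j g y‖ ≤ M j :=
    fun j h1 h2 => hgM j (Finset.mem_Icc.2 ⟨h1, h2⟩)
  have hf1 : ∀ i, 1 ≤ i → i ≤ m → ‖iteratedFDeriv ℝ i f (g x)‖ ≤ 1 := fun i h1 h2 => by
    have hi : i ∈ Finset.Icc 1 (m + 2) := Finset.mem_Icc.2 ⟨h1, by omega⟩
    have hc0 : ∀ k ∈ Finset.Icc 1 (m + 2), 0 ≤ c k := fun k hk => (abs_nonneg _).trans (hfc k hk 0)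
    rw [norm_iteratedFDeriv_eq_norm_iteratedDeriv, Real.norm_eq_abs]
    exact (hfc i hi _).trans ((Finset.single_le_sum hc0 hi).trans hsum)
  have hM1 : 0 ≤ M 1 := (norm_nonneg _).trans (hgM' 1 le_rfl hm x)
  have hMm : 0 ≤ M m := (norm_nonneg _).trans (hgM' m hm le_rfl x)
  set D := (M 1 ^ m + M m) ^ ((m : ℝ)⁻¹)
  have hD0 : 0 ≤ D := by positivity
  have hDm : D ^ m = M 1 ^ m + M m := Real.rpow_inv_natCast_pow (by positivity) (by omega)
  have hM1D : M 1 ≤ D := (pow_le_pow_iff_left₀ hM1 hD0 (n := m) (by omega)).1 (by linarith)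
  have hgD : ∀ j, 1 ≤ j → j ≤ m → ‖iteratedFDeriv ℝ j g x‖ ≤ (3 ^ m * D) ^ j :=
    fun j h1 h2 => norm_iteratedFDeriv_le_of_bounds hg
      (fun i h1 h2 => ⟨M i, by rintro _ ⟨y, rfl⟩; exact hgM' i h1 h2 y⟩) hD0
      (fun y => (hgM' 1 le_rfl hm y).trans hM1D)
      (fun y => (hgM' m hm le_rfl y).trans (by nlinarith [pow_nonneg hM1 m])) h1 h2 x
  calc ‖iteratedFDeriv ℝ m (fun y => f (g y)) x‖ ≤ m ! * 1 * (3 ^ m * D) ^ m :=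
        norm_iteratedFDeriv_comp_le_of_le_pow hm (hf.of_le (by simp)) hg hf1 hgD
    _ = m ! * 3 ^ (m * m) * (M 1 ^ m + M m) := by rw [mul_pow, hDm, ← pow_mul]; ring

/-- Bound on the `m`-th derivative of a composition:
`‖∇^m (f ∘ g)‖_∞ ≲ ‖∇g‖_∞^m + ‖∇^m g‖_∞` when `Σ_{k=1}^{m+2} ‖f^{(k)}‖_∞ ≤ 1`. -/
theorem composition_derivative_bound
    (d m : ℕ) (hd : 1 ≤ d) (hm : 1 ≤ m) :
    ∃ C : ℝ, 0 < C ∧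
      ∀ (f : ℝ → ℝ) (c : ℕ → ℝ),
        ContDiff ℝ (m + 2) f →
        (∀ k ∈ Finset.Icc 1 (m + 2), ∀ x : ℝ, |iteratedDeriv k f x| ≤ c k) →
        (∑ k ∈ Finset.Icc 1 (m + 2), c k) ≤ 1 →
        ∀ (g : EuclideanSpace ℝ (Fin d) → ℝ) (M : ℕ → ℝ),
          ContDiff ℝ m g →
          (∀ j ∈ Finset.Icc 1 m, ∀ x, ‖iteratedFDeriv ℝ j g x‖ ≤ M j) →
          ∀ x, ‖iteratedFDeriv ℝ m (fun y => f (g y)) x‖ ≤ C * (M 1 ^ m + M m) :=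
  composition_derivative_bound_general d m hm
end

section
/- Let d ≥ 1, m ≥ 0 be integers and α ∈ (0,1). Let f : ℝ → ℝ be (m+2)-times continuously differentiable with Σ_{k=1}^{m+2} ‖f^{(k)}‖_{L^∞} ≤ 1, and let g : ℝ^d → ℝ be m-times continuously differentiable with ‖∇^j g‖_{L^∞} < ∞ for 1 ≤ j ≤ m, [g]_{Ċ^α} < ∞ and [∇^m g]_{Ċ^α} < ∞. Then there is a constant C depending only on d, m and α such that [∇^m (f ∘ g)]_{Ċ^α} ≤ C ( [g]_{Ċ^α}^{(m+α)/α} + [∇^m g]_{Ċ^α} ). -/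
/-!
For `1 ≤ j ≤ m` and every scale `r > 0` one has the interpolation inequality
`r ^ j ‖D^j g‖ ≲ Kg r ^ α + Km r ^ (m + α)`: apply `D^j g x` to vectors of length `≤ r` and
compare with the `j`-th mixed finite difference of `g`, which is at most `2 ^ j Kg r ^ α`; the
error is controlled by the oscillation of `D^j g` at scale `j r`, bounded through `[D^m g]_α` when
`j = m` and through `‖D^(j+1) g‖` otherwise (downward induction on `j`).

At the balancing scale `ℓ`, `Km ℓ ^ m = Kg`, this gives `‖D^j g‖ ≲ Kg ℓ ^ (α - j)` and
`[D^j g]_α ≲ Kg ℓ ^ (-j)`. In the Faà di Bruno expansion of `D^m (f ∘ g)`, a term with `k` blocks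
then has `α`-Hölder constant `≲ Km t ^ (k - 1) (t + k)` with `t = Kg ℓ ^ α`, and for `n ≤ m`,
`Km t ^ n ≤ Km + Km t ^ (m / α) = Km + Kg ^ ((m + α) / α)`. The cases `Kg = 0` or `Km = 0` follow
by applying the estimate to `Kg + ε`, `Km + ε` and letting `ε → 0`.
-/

open Set
open scoped Nat

section MixedDiff

variable {E F : Type*} [NormedAddCommGroup E] [NormedAddCommGroup F]

def mixedDiff : (j : ℕ) → (Fin j → E) → (E → F) → E → F
  | 0, _, h => h
  | j + 1, v, h => mixedDiff j (Fin.tail v) (fun x => h (x + v 0) - h x)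

theorem norm_mixedDiff_le {j : ℕ} (v : Fin j → E) {h : E → F} {B : ℝ}
    (hB : ∀ x, ‖h x‖ ≤ B) (x : E) : ‖mixedDiff j v h x‖ ≤ 2 ^ j * B := by
  induction j generalizing h B with
  | zero => simpa [mixedDiff] using hB x
  | succ j ih =>
    have hG : ∀ y, ‖h (y + v 0) - h y‖ ≤ 2 * B := fun y =>
      (norm_sub_le _ _).trans (by linarith [hB (y + v 0), hB y])
    simpa [mixedDiff, pow_succ, mul_assoc, mul_comm 2 B] using ih (Fin.tail v) hG

end MixedDiff

theorem norm_sub_le_mul_rpow_of_norm_le_of_lipschitz {E F : Type*} [SeminormedAddCommGroup E]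
    [SeminormedAddCommGroup F] {u : E → F} {B ℓ α : ℝ} (hℓ : 0 < ℓ) (hα₀ : 0 ≤ α) (hα₁ : α ≤ 1)
    (hbd : ∀ x, ‖u x‖ ≤ B * ℓ ^ α) (hlip : ∀ x y, ‖u x - u y‖ ≤ B * ℓ ^ α / ℓ * ‖x - y‖)
    (x y : E) : ‖u x - u y‖ ≤ 2 * B * ‖x - y‖ ^ α := by
  have hB : 0 ≤ B := nonneg_of_mul_nonneg_left ((norm_nonneg _).trans (hbd x)) (by positivity)
  set r := ‖x - y‖
  rcases le_total r ℓ with hrℓ | hℓr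
  · have hsplit : ∀ a : ℝ, 0 ≤ a → a = a ^ α * a ^ (1 - α) := fun a ha => by
      rw [← Real.rpow_add' ha (by norm_num), add_sub_cancel, Real.rpow_one]
    have : ℓ ^ α * r ≤ r ^ α * ℓ := calc
      ℓ ^ α * r = ℓ ^ α * (r ^ α * r ^ (1 - α)) := by rw [← hsplit r (norm_nonneg _)]
      _ ≤ ℓ ^ α * (r ^ α * ℓ ^ (1 - α)) := by gcongr
      _ = r ^ α * (ℓ ^ α * ℓ ^ (1 - α)) := by ring
      _ = r ^ α * ℓ := by rw [← hsplit ℓ hℓ.le]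
    calc ‖u x - u y‖ ≤ B * ℓ ^ α / ℓ * r := hlip x y
      _ = B * (ℓ ^ α * r) / ℓ := by ring
      _ ≤ B * (r ^ α * ℓ) / ℓ := by gcongr
      _ ≤ 2 * B * r ^ α := by
          rw [mul_div_assoc, mul_div_cancel_right₀ _ hℓ.ne']
          nlinarith [Real.rpow_nonneg (norm_nonneg (x - y)) α]
  · calc ‖u x - u y‖ ≤ B * ℓ ^ α + B * ℓ ^ α := (norm_sub_le _ _).trans (add_le_add (hbd x) (hbd y))
      _ ≤ 2 * B * r ^ α := by
          have : ℓ ^ α ≤ r ^ α := by gcongr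
          nlinarith

theorem ContinuousMultilinearMap.pow_mul_opNorm_le_of_forall_norm_le {E F : Type*}
    [NormedAddCommGroup E] [NormedSpace ℝ E] [NormedAddCommGroup F] [NormedSpace ℝ F] {n : ℕ}
    (T : ContinuousMultilinearMap ℝ (fun _ : Fin n => E) F) {r C : ℝ} (hr : 0 < r)
    (hT : ∀ v : Fin n → E, (∀ i, ‖v i‖ ≤ r) → ‖T v‖ ≤ C) : r ^ n * ‖T‖ ≤ C := by
  have hC : 0 ≤ C := (norm_nonneg _).trans (hT 0 fun _ => by simpa using hr.le)
  rw [← le_div_iff₀' (by positivity)]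
  refine T.opNorm_le_bound (by positivity) fun v => ?_
  by_cases hv : ∀ i, v i ≠ 0
  · have hvn : ∀ i, 0 < ‖v i‖ := fun i => norm_pos_iff.2 (hv i)
    set w : Fin n → E := fun i => (r / ‖v i‖) • v i
    have hw : ∀ i, ‖w i‖ ≤ r := fun i => by
      rw [norm_smul, Real.norm_of_nonneg (by positivity), div_mul_cancel₀ _ (hvn i).ne']
    have hTv : T v = (∏ i, (‖v i‖ / r)) • T w := by
      rw [← T.map_smul_univ]
      congr 1
      funext i
      rw [smul_smul, div_mul_div_cancel₀ hr.ne', div_self (hvn i).ne', one_smul]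
    rw [hTv, norm_smul, Real.norm_of_nonneg (by positivity), Finset.prod_div_distrib,
      Finset.prod_const, Finset.card_univ, Fintype.card_fin, div_mul_comm]
    gcongr
    exact hT w hw
  · obtain ⟨i, hi⟩ := not_forall_not.1 hv
    rw [T.map_coord_zero i hi, norm_zero]
    positivity

section Interpolation

variable {E F : Type*} [NormedAddCommGroup E] [NormedSpace ℝ E]
  [NormedAddCommGroup F] [NormedSpace ℝ F]

theorem norm_iteratedFDeriv_sub_le_of_norm_iteratedFDeriv_succ_le {n : ℕ} {h : E → F}
    (hh : ContDiff ℝ (n + 1) h) {C : ℝ} (hC : ∀ u, ‖iteratedFDeriv ℝ (n + 1) h u‖ ≤ C)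
    (y z : E) : ‖iteratedFDeriv ℝ n h y - iteratedFDeriv ℝ n h z‖ ≤ C * ‖y - z‖ :=
  convex_univ.norm_image_sub_le_of_norm_fderiv_le
    (fun u _ => hh.differentiable_iteratedFDeriv (by norm_cast; omega) u)
    (fun u _ => (norm_fderiv_iteratedFDeriv).trans_le (hC u)) (mem_univ z) (mem_univ y)

theorem iteratedFDeriv_comp_add_right_sub {n : ℕ} {h : E → F} (hh : ContDiff ℝ n h) (w x : E) :
    iteratedFDeriv ℝ n (fun y => h (y + w) - h y) x =
      iteratedFDeriv ℝ n h (x + w) - iteratedFDeriv ℝ n h x := by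
  have hw : ContDiff ℝ n (fun y => h (y + w)) := hh.comp (contDiff_id.add contDiff_const)
  rw [fun_iteratedFDeriv_sub_apply hw.contDiffAt hh.contDiffAt, iteratedFDeriv_comp_add_right]

theorem norm_sub_sub_fderiv_iteratedFDeriv_le {j : ℕ} {h : E → F}
    (hh : ContDiff ℝ (j + 1) h) {x w : E} {ω r : ℝ} (hw : ‖w‖ ≤ r)
    (hω : ∀ u, ‖u - x‖ ≤ r →
      ‖iteratedFDeriv ℝ (j + 1) h u - iteratedFDeriv ℝ (j + 1) h x‖ ≤ ω) :
    ‖iteratedFDeriv ℝ j h (x + w) - iteratedFDeriv ℝ j h x -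
        fderiv ℝ (iteratedFDeriv ℝ j h) x w‖ ≤ ω * ‖w‖ := by
  have hr : 0 ≤ r := (norm_nonneg w).trans hw
  have key := (convex_closedBall x r).norm_image_sub_le_of_norm_fderiv_le'
    (fun u _ => hh.differentiable_iteratedFDeriv (m := j) (by norm_cast; omega) u)
    (fun u hu => (?_ : ‖fderiv ℝ (iteratedFDeriv ℝ j h) u -
      fderiv ℝ (iteratedFDeriv ℝ j h) x‖ ≤ ω)) (Metric.mem_closedBall_self hr)
    (by simpa [dist_eq_norm] using hw : x + w ∈ Metric.closedBall x r)
  · simpa using key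
  · rw [fderiv_iteratedFDeriv, Function.comp_apply, Function.comp_apply,
      ← LinearIsometryEquiv.map_sub, LinearIsometryEquiv.norm_map]
    exact hω u (by simpa [dist_eq_norm] using hu)

theorem mixedDiff_succ_sub_iteratedFDeriv {j : ℕ} {h : E → F} (hh : ContDiff ℝ j h)
    (v : Fin (j + 1) → E) (x : E) :
    mixedDiff (j + 1) v h x - iteratedFDeriv ℝ (j + 1) h x v =
      (mixedDiff j (Fin.tail v) (fun y => h (y + v 0) - h y) x -
          iteratedFDeriv ℝ j (fun y => h (y + v 0) - h y) x (Fin.tail v)) +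
        (iteratedFDeriv ℝ j h (x + v 0) - iteratedFDeriv ℝ j h x -
          fderiv ℝ (iteratedFDeriv ℝ j h) x (v 0)) (Fin.tail v) := by
  rw [iteratedFDeriv_succ_apply_left, iteratedFDeriv_comp_add_right_sub hh]
  simp only [mixedDiff, sub_apply]
  abel

theorem norm_mixedDiff_sub_iteratedFDeriv_le {j : ℕ} {h : E → F} (hh : ContDiff ℝ j h)
    {ω r : ℝ} (hω₀ : 0 ≤ ω) (hr : 0 ≤ r)
    (hω : ∀ y z, ‖y - z‖ ≤ j * r → ‖iteratedFDeriv ℝ j h y - iteratedFDeriv ℝ j h z‖ ≤ ω)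
    {v : Fin j → E} (hv : ∀ i, ‖v i‖ ≤ r) (x : E) :
    ‖mixedDiff j v h x - iteratedFDeriv ℝ j h x v‖ ≤ j ! * ω * r ^ j := by
  induction j generalizing h ω x with
  | zero => simp [mixedDiff, hω₀]
  | succ j ih =>
    set w := v 0
    have hw : ‖w‖ ≤ r := hv 0
    have hj : ContDiff ℝ j h := hh.of_le (by norm_cast; omega)
    set G : E → F := fun y => h (y + w) - h y
    have hGc : ContDiff ℝ (j + 1) G := (hh.comp (contDiff_id.add contDiff_const)).sub hh
    have hωw : ∀ u, ‖iteratedFDeriv ℝ (j + 1) h (u + w) - iteratedFDeriv ℝ (j + 1) h u‖ ≤ ω :=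
      fun u => hω _ _ (by push_cast; simp only [add_sub_cancel_left]; nlinarith)
    have hG : ∀ y z, ‖y - z‖ ≤ j * r →
        ‖iteratedFDeriv ℝ j G y - iteratedFDeriv ℝ j G z‖ ≤ ω * (j * r) := fun y z hyz =>
      (norm_iteratedFDeriv_sub_le_of_norm_iteratedFDeriv_succ_le hGc
        (fun u => by rw [iteratedFDeriv_comp_add_right_sub hh]; exact hωw u) y z).trans
        (by gcongr)
    have hcorr := norm_sub_sub_fderiv_iteratedFDeriv_le hh hw (x := x) (fun u hu =>
      hω u x (hu.trans (by push_cast; nlinarith)))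
    have htail : ∏ i, ‖Fin.tail v i‖ ≤ r ^ j :=
      (Finset.prod_le_prod (fun i _ => norm_nonneg _) (fun i _ => hv i.succ)).trans_eq
        (by simp : ∏ _i : Fin j, r = r ^ j)
    rw [mixedDiff_succ_sub_iteratedFDeriv hj]
    calc _ ≤ j ! * (ω * (j * r)) * r ^ j + ω * ‖w‖ * r ^ j :=
          (norm_add_le _ _).trans (add_le_add
            (ih (hGc.of_le (by norm_cast; omega)) (by positivity) hG (fun i => hv i.succ) x)
            ((ContinuousMultilinearMap.le_opNorm _ _).trans
              (mul_le_mul hcorr htail (by positivity) (by positivity))))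
      _ ≤ (j * j ! + 1) * ω * r ^ (j + 1) := by
          rw [pow_succ]; nlinarith [mul_nonneg hω₀ (pow_nonneg hr j)]
      _ ≤ (j + 1)! * ω * r ^ (j + 1) := by
          gcongr
          exact_mod_cast (show j * j ! + 1 ≤ (j + 1)! by
            rw [Nat.factorial_succ]; nlinarith [Nat.factorial_pos j])

theorem pow_mul_norm_iteratedFDeriv_le {j : ℕ} (hj : 1 ≤ j) {h : E → F} (hh : ContDiff ℝ j h)
    {B ω r : ℝ} (hω₀ : 0 ≤ ω) (hr : 0 < r) (hB : ∀ x w, ‖w‖ ≤ r → ‖h (x + w) - h x‖ ≤ B)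
    (hω : ∀ y z, ‖y - z‖ ≤ j * r → ‖iteratedFDeriv ℝ j h y - iteratedFDeriv ℝ j h z‖ ≤ ω)
    (x : E) : r ^ j * ‖iteratedFDeriv ℝ j h x‖ ≤ 2 ^ j * B + j ! * ω * r ^ j := by
  obtain ⟨j, rfl⟩ : ∃ i, j = i + 1 := ⟨j - 1, by omega⟩
  refine ContinuousMultilinearMap.pow_mul_opNorm_le_of_forall_norm_le _ hr fun v hv => ?_
  have hB₀ : 0 ≤ B := (norm_nonneg _).trans (hB x 0 (by simpa using hr.le))
  have hdiff : ‖mixedDiff (j + 1) v h x‖ ≤ 2 ^ j * B :=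
    norm_mixedDiff_le (Fin.tail v) (fun y => hB y (v 0) (hv 0)) x
  calc ‖iteratedFDeriv ℝ (j + 1) h x v‖
      ≤ ‖mixedDiff (j + 1) v h x‖ +
          ‖mixedDiff (j + 1) v h x - iteratedFDeriv ℝ (j + 1) h x v‖ :=
        norm_le_norm_add_norm_sub _ _
    _ ≤ 2 ^ j * B + (j + 1)! * ω * r ^ (j + 1) :=
        add_le_add hdiff (norm_mixedDiff_sub_iteratedFDeriv_le hh hω₀ hr.le hω hv x)
    _ ≤ 2 ^ (j + 1) * B + (j + 1)! * ω * r ^ (j + 1) := by gcongr <;> norm_num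

def interpolationConst (m : ℕ) : ℝ := 2 ^ m + m * m !

theorem one_le_interpolationConst (m : ℕ) : 1 ≤ interpolationConst m := by
  have : (1 : ℝ) ≤ 2 ^ m := one_le_pow₀ one_le_two
  have : (0 : ℝ) ≤ m * m ! := by positivity
  unfold interpolationConst
  linarith

theorem pow_mul_norm_iteratedFDeriv_le_of_holder {m j : ℕ} (hj : 1 ≤ j) (hjm : j ≤ m)
    {g : E → F} (hg : ContDiff ℝ m g) {α Kg Km r : ℝ} (hα₀ : 0 ≤ α) (hα₁ : α ≤ 1)
    (hKg : 0 ≤ Kg) (hKm : 0 ≤ Km) (hr : 0 < r)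
    (hgH : ∀ x y, ‖g x - g y‖ ≤ Kg * ‖x - y‖ ^ α)
    (hgmH : ∀ x y, ‖iteratedFDeriv ℝ m g x - iteratedFDeriv ℝ m g y‖ ≤ Km * ‖x - y‖ ^ α)
    (x : E) :
    r ^ j * ‖iteratedFDeriv ℝ j g x‖ ≤
      interpolationConst m ^ (m + 1 - j) * (Kg * r ^ α + Km * r ^ ((m : ℝ) + α)) := by
  set S := interpolationConst m
  have hS : 1 ≤ S := one_le_interpolationConst m
  set P := Kg * r ^ α + Km * r ^ ((m : ℝ) + α)
  have hKgP : Kg * r ^ α ≤ P := le_add_of_nonneg_right (by positivity)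
  have hKmP : Km * r ^ ((m : ℝ) + α) ≤ P := le_add_of_nonneg_left (by positivity)
  have hP : 0 ≤ P := (by positivity : 0 ≤ Kg * r ^ α).trans hKgP
  have hincr : ∀ x w, ‖w‖ ≤ r → ‖g (x + w) - g x‖ ≤ Kg * r ^ α := fun x w hw =>
    (hgH _ _).trans (by rw [add_sub_cancel_left]; gcongr)
  induction hjm using Nat.decreasingInduction generalizing x with
  | self =>
    have hosc : ∀ y z, ‖y - z‖ ≤ m * r →
        ‖iteratedFDeriv ℝ m g y - iteratedFDeriv ℝ m g z‖ ≤ Km * (m * r) ^ α :=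
      fun y z hyz => (hgmH y z).trans (by gcongr)
    have hmα : ((m : ℝ) * r) ^ α * r ^ m ≤ m * r ^ ((m : ℝ) + α) := by
      rw [Real.mul_rpow (by positivity) hr.le, Real.rpow_add hr, Real.rpow_natCast, mul_assoc,
        mul_comm (r ^ α)]
      gcongr
      exact Real.rpow_le_self_of_one_le (by exact_mod_cast hj : (1 : ℝ) ≤ m) hα₁
    calc r ^ m * ‖iteratedFDeriv ℝ m g x‖
        ≤ 2 ^ m * (Kg * r ^ α) + m ! * (Km * (m * r) ^ α) * r ^ m :=
          pow_mul_norm_iteratedFDeriv_le hj hg (by positivity) hr hincr hosc x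
      _ ≤ 2 ^ m * P + m * m ! * P := by
          refine add_le_add (by gcongr) ?_
          calc (m ! : ℝ) * (Km * ((m : ℝ) * r) ^ α) * r ^ m
              = m ! * Km * (((m : ℝ) * r) ^ α * r ^ m) := by ring
            _ ≤ m ! * Km * (m * r ^ ((m : ℝ) + α)) := by gcongr
            _ = m * m ! * (Km * r ^ ((m : ℝ) + α)) := by ring
            _ ≤ m * m ! * P := by gcongr
      _ = S ^ (m + 1 - m) * P := by simp [S, interpolationConst, add_mul]
  | of_succ k hk ih =>
    have hD : ∀ u, ‖iteratedFDeriv ℝ (k + 1) g u‖ ≤ S ^ (m - k) * P / r ^ (k + 1) := fun u => by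
      rw [le_div_iff₀' (by positivity)]
      simpa using ih (by omega) u
    have hosc : ∀ y z, ‖y - z‖ ≤ k * r → ‖iteratedFDeriv ℝ k g y - iteratedFDeriv ℝ k g z‖ ≤
        S ^ (m - k) * P / r ^ (k + 1) * (k * r) := fun y z hyz =>
      (norm_iteratedFDeriv_sub_le_of_norm_iteratedFDeriv_succ_le
        (hg.of_le (by norm_cast)) hD y z).trans (by gcongr)
    have hkm : (k : ℝ) * k ! ≤ m * m ! := by
      have := Nat.factorial_le hk.le
      gcongr
    calc r ^ k * ‖iteratedFDeriv ℝ k g x‖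
        ≤ 2 ^ k * (Kg * r ^ α) + k ! * (S ^ (m - k) * P / r ^ (k + 1) * (k * r)) * r ^ k :=
          pow_mul_norm_iteratedFDeriv_le hj (hg.of_le (by norm_cast; omega)) (by positivity)
            hr hincr hosc x
      _ = 2 ^ k * (Kg * r ^ α) + k * k ! * (S ^ (m - k) * P) := by
          field_simp
          ring
      _ ≤ 2 ^ m * (S ^ (m - k) * P) + m * m ! * (S ^ (m - k) * P) := by
          refine add_le_add ?_ (by gcongr)
          calc (2 : ℝ) ^ k * (Kg * r ^ α) ≤ 2 ^ m * P :=
                mul_le_mul (pow_le_pow_right₀ one_le_two hk.le) hKgP (by positivity) (by positivity)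
            _ ≤ 2 ^ m * (S ^ (m - k) * P) := by
                gcongr; exact le_mul_of_one_le_left hP (one_le_pow₀ hS)
      _ = S ^ (m + 1 - k) * P := by
          rw [show m + 1 - k = m - k + 1 by omega, pow_succ]
          simp only [S, interpolationConst]
          ring

variable {m j : ℕ} {g : E → F} {α Kg Km ℓ : ℝ}

theorem norm_iteratedFDeriv_le_of_scale (hj : 1 ≤ j) (hjm : j ≤ m)
    (hg : ContDiff ℝ m g) (hα₀ : 0 ≤ α) (hα₁ : α ≤ 1) (hKg : 0 ≤ Kg) (hKm : 0 ≤ Km) (hℓ : 0 < ℓ)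
    (hKmℓ : Km * ℓ ^ m = Kg) (hgH : ∀ x y, ‖g x - g y‖ ≤ Kg * ‖x - y‖ ^ α)
    (hgmH : ∀ x y, ‖iteratedFDeriv ℝ m g x - iteratedFDeriv ℝ m g y‖ ≤ Km * ‖x - y‖ ^ α)
    (x : E) :
    ‖iteratedFDeriv ℝ j g x‖ ≤ 2 * interpolationConst m ^ m * Kg * ℓ ^ α / ℓ ^ j := by
  have hS := one_le_interpolationConst m
  have h := pow_mul_norm_iteratedFDeriv_le_of_holder hj hjm hg hα₀ hα₁ hKg hKm hℓ hgH hgmH x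
  rw [Real.rpow_add hℓ, Real.rpow_natCast, ← mul_assoc, hKmℓ] at h
  rw [le_div_iff₀' (by positivity)]
  calc ℓ ^ j * ‖iteratedFDeriv ℝ j g x‖
      ≤ interpolationConst m ^ (m + 1 - j) * (Kg * ℓ ^ α + Kg * ℓ ^ α) := h
    _ ≤ interpolationConst m ^ m * (Kg * ℓ ^ α + Kg * ℓ ^ α) := by
        gcongr
        omega
    _ = 2 * interpolationConst m ^ m * Kg * ℓ ^ α := by ring

theorem norm_iteratedFDeriv_sub_le_of_scale (hj : 1 ≤ j) (hjm : j ≤ m)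
    (hg : ContDiff ℝ m g) (hα₀ : 0 ≤ α) (hα₁ : α ≤ 1) (hKg : 0 ≤ Kg) (hKm : 0 ≤ Km) (hℓ : 0 < ℓ)
    (hKmℓ : Km * ℓ ^ m = Kg) (hgH : ∀ x y, ‖g x - g y‖ ≤ Kg * ‖x - y‖ ^ α)
    (hgmH : ∀ x y, ‖iteratedFDeriv ℝ m g x - iteratedFDeriv ℝ m g y‖ ≤ Km * ‖x - y‖ ^ α)
    (x y : E) :
    ‖iteratedFDeriv ℝ j g x - iteratedFDeriv ℝ j g y‖ ≤
      2 * (2 * interpolationConst m ^ m * Kg / ℓ ^ j) * ‖x - y‖ ^ α := by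
  have hS := one_le_interpolationConst m
  rcases hjm.lt_or_eq with hjm | rfl
  · refine norm_sub_le_mul_rpow_of_norm_le_of_lipschitz hℓ hα₀ hα₁ (fun x => ?_) (fun x y => ?_) x y
    · exact (norm_iteratedFDeriv_le_of_scale hj hjm.le hg hα₀ hα₁ hKg hKm hℓ hKmℓ hgH hgmH
        x).trans_eq (by ring)
    · refine (norm_iteratedFDeriv_sub_le_of_norm_iteratedFDeriv_succ_le (hg.of_le (by norm_cast))
        (norm_iteratedFDeriv_le_of_scale (by omega) hjm hg hα₀ hα₁ hKg hKm hℓ hKmℓ hgH hgmH)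
        x y).trans_eq ?_
      rw [pow_succ]
      field_simp
  · have hKm' : Km = Kg / ℓ ^ j := eq_div_of_mul_eq (by positivity) hKmℓ
    refine (hgmH x y).trans (mul_le_mul_of_nonneg_right ?_ (by positivity))
    rw [hKm', ← mul_div_assoc]
    gcongr
    nlinarith [one_le_pow₀ (n := j) hS]

end Interpolation

theorem OrderedFinpartition.norm_compAlongOrderedFinpartition_sub_le {𝕜 E F G : Type*}
    [NontriviallyNormedField 𝕜] [NormedAddCommGroup E] [NormedSpace 𝕜 E] [NormedAddCommGroup F]
    [NormedSpace 𝕜 F] [NormedAddCommGroup G] [NormedSpace 𝕜 G] {n : ℕ} (c : OrderedFinpartition n)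
    (f₁ f₂ : F [×c.length]→L[𝕜] G) (p₁ p₂ : ∀ i, E [×c.partSize i]→L[𝕜] F)
    {u : Fin c.length → ℝ} {δ : ℝ} (hp₁ : ∀ i, ‖p₁ i‖ ≤ u i) (hp₂ : ∀ i, ‖p₂ i‖ ≤ u i)
    (hδ : ∀ i, ‖p₁ i - p₂ i‖ ≤ δ * u i) :
    ‖c.compAlongOrderedFinpartition f₁ p₁ - c.compAlongOrderedFinpartition f₂ p₂‖ ≤
      (‖f₁ - f₂‖ + c.length * δ * ‖f₂‖) * ∏ i, u i := by
  classical
  set L := c.compAlongOrderedFinpartitionL 𝕜 E F G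
  have hsplit : c.compAlongOrderedFinpartition f₁ p₁ - c.compAlongOrderedFinpartition f₂ p₂ =
      c.compAlongOrderedFinpartition (f₁ - f₂) p₁ + (L f₂ p₁ - L f₂ p₂) := by
    ext v
    simp [L]
  have hfirst : ‖c.compAlongOrderedFinpartition (f₁ - f₂) p₁‖ ≤ ‖f₁ - f₂‖ * ∏ i, u i :=
    (c.norm_compAlongOrderedFinpartition_le _ _).trans (mul_le_mul_of_nonneg_left
      (Finset.prod_le_prod (fun i _ => norm_nonneg _) fun i _ => hp₁ i) (norm_nonneg _))
  have hterm : ∀ i, (∏ j, if j = i then ‖p₁ i - p₂ i‖ else max ‖p₁ j‖ ‖p₂ j‖) ≤ δ * ∏ j, u j := by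
    intro i
    calc (∏ j, if j = i then ‖p₁ i - p₂ i‖ else max ‖p₁ j‖ ‖p₂ j‖)
        ≤ ∏ j, (if j = i then δ else 1) * u j := by
          refine Finset.prod_le_prod (fun j _ => by split_ifs <;> positivity) fun j _ => ?_
          split_ifs with hji
          · subst hji; simpa using hδ j
          · simpa using max_le (hp₁ j) (hp₂ j)
      _ = δ * ∏ j, u j := by rw [Finset.prod_mul_distrib, Finset.prod_ite_eq']; simp
  have hsecond : ‖L f₂ p₁ - L f₂ p₂‖ ≤ c.length * δ * ‖f₂‖ * ∏ i, u i :=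
    ((L f₂).norm_image_sub_le' p₁ p₂).trans <| by
      calc ‖L f₂‖ * ∑ i, ∏ j, (if j = i then ‖p₁ i - p₂ i‖ else max ‖p₁ j‖ ‖p₂ j‖)
          ≤ ‖f₂‖ * ∑ _i : Fin c.length, δ * ∏ j, u j := by
            refine mul_le_mul (c.norm_compAlongOrderedFinpartitionL_apply_le f₂)
              (Finset.sum_le_sum fun i _ => hterm i) ?_ (norm_nonneg _)
            exact Finset.sum_nonneg fun i _ => Finset.prod_nonneg fun j _ => by
              split_ifs <;> positivity
        _ = c.length * δ * ‖f₂‖ * ∏ i, u i := by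
            rw [Finset.sum_const, Finset.card_univ, Fintype.card_fin, nsmul_eq_mul]; ring
  rw [hsplit]
  exact (norm_add_le _ _).trans (by linarith)

theorem iteratedFDeriv_comp_eq_sum {𝕜 E F G : Type*}
    [NontriviallyNormedField 𝕜] [NormedAddCommGroup E] [NormedSpace 𝕜 E] [NormedAddCommGroup F]
    [NormedSpace 𝕜 F] [NormedAddCommGroup G] [NormedSpace 𝕜 G] {n : ℕ} {f : F → G} {g : E → F}
    (hf : ContDiff 𝕜 n f) (hg : ContDiff 𝕜 n g) (x : E) :
    iteratedFDeriv 𝕜 n (f ∘ g) x = ∑ c : OrderedFinpartition n,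
      c.compAlongOrderedFinpartition (iteratedFDeriv 𝕜 c.length f (g x))
        (fun i => iteratedFDeriv 𝕜 (c.partSize i) g x) :=
  iteratedFDeriv_comp hf.contDiffAt hg.contDiffAt le_rfl

theorem OrderedFinpartition.sum_partSize {n : ℕ} (c : OrderedFinpartition n) :
    ∑ i, c.partSize i = n := by
  simpa using Fintype.card_congr c.equivSigma

theorem mul_pow_le_rpow_add {m n : ℕ} (hnm : n ≤ m) {α Kg Km ℓ : ℝ} (hα₀ : 0 < α) (hα₁ : α ≤ 1)
    (hKg : 0 ≤ Kg) (hKm : 0 ≤ Km) (hℓ : 0 < ℓ) (hKmℓ : Km * ℓ ^ m = Kg) :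
    Km * (Kg * ℓ ^ α) ^ n ≤ Kg ^ ((m + α) / α) + Km := by
  set t := Kg * ℓ ^ α
  rcases le_total t 1 with ht | ht
  · have : Km * t ^ n ≤ Km := mul_le_of_le_one_right hKm (pow_le_one₀ (by positivity) ht)
    linarith [Real.rpow_nonneg hKg ((m + α) / α)]
  · have hexp : (n : ℝ) ≤ m / α := by
      rw [le_div_iff₀ hα₀]
      exact (mul_le_of_le_one_right (Nat.cast_nonneg n) hα₁).trans (by exact_mod_cast hnm)
    have htm : Km * t ^ (m / α) = Kg ^ ((m + α) / α) := by
      rw [Real.mul_rpow hKg (by positivity), ← Real.rpow_mul hℓ.le, mul_div_cancel₀ _ hα₀.ne',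
        Real.rpow_natCast, mul_left_comm, hKmℓ, add_div, div_self hα₀.ne',
        Real.rpow_add_one' hKg (by positivity), mul_comm]
    calc Km * t ^ n = Km * t ^ (n : ℝ) := by rw [Real.rpow_natCast]
      _ ≤ Km * t ^ (m / α) := by gcongr
      _ ≤ Kg ^ ((m + α) / α) + Km := by linarith

theorem mul_add_mul_pow_div_le {m k : ℕ} (hk : 1 ≤ k) (hkm : k ≤ m) {α Kg Km ℓ s R : ℝ}
    (hα₀ : 0 < α) (hα₁ : α ≤ 1) (hKm : 0 ≤ Km) (hℓ : 0 < ℓ) (hKmℓ : Km * ℓ ^ m = Kg)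
    (hs : 1 ≤ s) (hR : 0 ≤ R) :
    (Kg * R + k * (2 * R / ℓ ^ α)) * ((s * Kg * ℓ ^ α) ^ k / ℓ ^ m) ≤
      s ^ m * (1 + 2 * m) * (Kg ^ ((m + α) / α) + Km) * R := by
  obtain ⟨n, rfl⟩ : ∃ n, k = n + 1 := ⟨k - 1, by omega⟩
  have hKg : 0 ≤ Kg := hKmℓ ▸ by positivity
  have h₁ := mul_pow_le_rpow_add hkm hα₀ hα₁ hKg hKm hℓ hKmℓ
  have h₀ := mul_pow_le_rpow_add (n := n) (by omega) hα₀ hα₁ hKg hKm hℓ hKmℓ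
  set X := Kg ^ ((m + α) / α) + Km
  set t := Kg * ℓ ^ α
  have hℓα : 0 < ℓ ^ α := by positivity
  have hid : (Kg * R + (n + 1 : ℕ) * (2 * R / ℓ ^ α)) * ((s * Kg * ℓ ^ α) ^ (n + 1) / ℓ ^ m) =
      s ^ (n + 1) * R * (Km * t ^ (n + 1) + 2 * (n + 1) * (Km * t ^ n)) := by
    simp only [t, ← hKmℓ]
    field_simp
    push_cast
    ring
  rw [hid]
  calc s ^ (n + 1) * R * (Km * t ^ (n + 1) + 2 * (n + 1) * (Km * t ^ n))
      ≤ s ^ (n + 1) * R * (X + 2 * (n + 1) * X) := by gcongr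
    _ = s ^ (n + 1) * (1 + 2 * (n + 1 : ℕ)) * X * R := by push_cast; ring
    _ ≤ s ^ m * (1 + 2 * m) * X * R := by
        have : 0 ≤ X := by positivity
        gcongr

section Composition

variable {E F G : Type*} [NormedAddCommGroup E] [NormedSpace ℝ E] [NormedAddCommGroup F]
  [NormedSpace ℝ F] [NormedAddCommGroup G] [NormedSpace ℝ G] {m : ℕ} {f : F → G} {g : E → F}
  {α Kg Km : ℝ}

theorem norm_compAlongOrderedFinpartition_iteratedFDeriv_sub_le (hm : 1 ≤ m)
    (c : OrderedFinpartition m) (hf : ContDiff ℝ (m + 1) f)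
    (hfD : ∀ k ∈ Finset.Icc 1 (m + 1), ∀ a, ‖iteratedFDeriv ℝ k f a‖ ≤ 1) (hg : ContDiff ℝ m g)
    (hα₀ : 0 < α) (hα₁ : α ≤ 1) (hKg : 0 ≤ Kg) (hKm : 0 ≤ Km) {ℓ : ℝ} (hℓ : 0 < ℓ)
    (hKmℓ : Km * ℓ ^ m = Kg) (hgH : ∀ x y, ‖g x - g y‖ ≤ Kg * ‖x - y‖ ^ α)
    (hgmH : ∀ x y, ‖iteratedFDeriv ℝ m g x - iteratedFDeriv ℝ m g y‖ ≤ Km * ‖x - y‖ ^ α)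
    (x y : E) :
    ‖c.compAlongOrderedFinpartition (iteratedFDeriv ℝ c.length f (g x))
          (fun i => iteratedFDeriv ℝ (c.partSize i) g x) -
        c.compAlongOrderedFinpartition (iteratedFDeriv ℝ c.length f (g y))
          (fun i => iteratedFDeriv ℝ (c.partSize i) g y)‖ ≤
      (2 * interpolationConst m ^ m) ^ m * (1 + 2 * m) * (Kg ^ ((m + α) / α) + Km) *
        ‖x - y‖ ^ α := by
  set s := 2 * interpolationConst m ^ m
  have hs : 1 ≤ s := by
    have := one_le_pow₀ (n := m) (one_le_interpolationConst m)
    linarith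
  set R := ‖x - y‖ ^ α
  have hk : 1 ≤ c.length := c.length_pos (by omega)
  have hkm : c.length ≤ m := c.length_le
  have hb : ∀ i, 1 ≤ c.partSize i := fun i => Nat.one_le_iff_ne_zero.2 (c.neZero_partSize i).out
  have hf₁ : ‖iteratedFDeriv ℝ c.length f (g x) - iteratedFDeriv ℝ c.length f (g y)‖ ≤ Kg * R := by
    refine (norm_iteratedFDeriv_sub_le_of_norm_iteratedFDeriv_succ_le
      (hf.of_le (by norm_cast; omega)) (hfD _ ?_) _ _).trans ?_
    · simp only [Finset.mem_Icc]; omega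
    · rw [one_mul]; exact hgH x y
  have hf₂ : ‖iteratedFDeriv ℝ c.length f (g y)‖ ≤ 1 :=
    hfD _ (by simp only [Finset.mem_Icc]; omega) _
  have hprod : ∏ i, s * Kg * ℓ ^ α / ℓ ^ c.partSize i = (s * Kg * ℓ ^ α) ^ c.length / ℓ ^ m := by
    rw [Finset.prod_div_distrib, Finset.prod_const, Finset.card_univ, Fintype.card_fin,
      Finset.prod_pow_eq_pow_sum, c.sum_partSize]
  calc _ ≤ (‖iteratedFDeriv ℝ c.length f (g x) - iteratedFDeriv ℝ c.length f (g y)‖ +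
          c.length * (2 * R / ℓ ^ α) * ‖iteratedFDeriv ℝ c.length f (g y)‖) *
          ∏ i, s * Kg * ℓ ^ α / ℓ ^ c.partSize i := by
        refine c.norm_compAlongOrderedFinpartition_sub_le _ _ _ _
          (fun i => norm_iteratedFDeriv_le_of_scale (hb i) (c.partSize_le i) hg hα₀.le hα₁
            hKg hKm hℓ hKmℓ hgH hgmH x)
          (fun i => norm_iteratedFDeriv_le_of_scale (hb i) (c.partSize_le i) hg hα₀.le hα₁
            hKg hKm hℓ hKmℓ hgH hgmH y)
          (fun i => (norm_iteratedFDeriv_sub_le_of_scale (hb i) (c.partSize_le i) hg hα₀.le hα₁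
            hKg hKm hℓ hKmℓ hgH hgmH x y).trans_eq ?_)
        field_simp
        simp only [R, s]
        ring
    _ ≤ (Kg * R + c.length * (2 * R / ℓ ^ α) * 1) * ((s * Kg * ℓ ^ α) ^ c.length / ℓ ^ m) := by
        rw [hprod]; gcongr
    _ ≤ s ^ m * (1 + 2 * m) * (Kg ^ ((m + α) / α) + Km) * R := by
        rw [mul_one]
        exact mul_add_mul_pow_div_le hk hkm hα₀ hα₁ hKm hℓ hKmℓ hs (by positivity)

noncomputable def compositionHolderConst (m : ℕ) : ℝ :=
  Fintype.card (OrderedFinpartition m) * ((2 * interpolationConst m ^ m) ^ m * (1 + 2 * m))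

theorem compositionHolderConst_pos (m : ℕ) : 0 < compositionHolderConst m := by
  have := one_le_interpolationConst m
  have : 0 < Fintype.card (OrderedFinpartition m) := Fintype.card_pos
  unfold compositionHolderConst
  positivity

theorem norm_iteratedFDeriv_comp_sub_le_of_pos (hm : 1 ≤ m) (hf : ContDiff ℝ (m + 1) f)
    (hfD : ∀ k ∈ Finset.Icc 1 (m + 1), ∀ a, ‖iteratedFDeriv ℝ k f a‖ ≤ 1) (hg : ContDiff ℝ m g)
    (hα₀ : 0 < α) (hα₁ : α ≤ 1) (hKg : 0 < Kg) (hKm : 0 < Km)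
    (hgH : ∀ x y, ‖g x - g y‖ ≤ Kg * ‖x - y‖ ^ α)
    (hgmH : ∀ x y, ‖iteratedFDeriv ℝ m g x - iteratedFDeriv ℝ m g y‖ ≤ Km * ‖x - y‖ ^ α)
    (x y : E) :
    ‖iteratedFDeriv ℝ m (f ∘ g) x - iteratedFDeriv ℝ m (f ∘ g) y‖ ≤
      compositionHolderConst m * (Kg ^ ((m + α) / α) + Km) * ‖x - y‖ ^ α := by
  set ℓ := (Kg / Km) ^ ((m : ℝ)⁻¹)
  have hKmℓ : Km * ℓ ^ m = Kg := by
    rw [Real.rpow_inv_natCast_pow (by positivity) (by omega)]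
    field_simp
  have hf' : ContDiff ℝ m f := hf.of_le (by norm_cast; omega)
  rw [iteratedFDeriv_comp_eq_sum hf' hg, iteratedFDeriv_comp_eq_sum hf' hg,
    ← Finset.sum_sub_distrib]
  refine (norm_sum_le _ _).trans ((Finset.sum_le_sum fun c _ =>
    norm_compAlongOrderedFinpartition_iteratedFDeriv_sub_le hm c hf hfD hg hα₀ hα₁ hKg.le hKm.le
      (by positivity) hKmℓ hgH hgmH x y).trans_eq ?_)
  rw [Finset.sum_const, Finset.card_univ, nsmul_eq_mul, compositionHolderConst]
  ring

theorem norm_iteratedFDeriv_zero_sub (h : E → F) (x y : E) :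
    ‖iteratedFDeriv ℝ 0 h x - iteratedFDeriv ℝ 0 h y‖ = ‖h x - h y‖ := by
  simp only [iteratedFDeriv_zero_eq_comp, Function.comp_apply, ← LinearIsometryEquiv.map_sub,
    LinearIsometryEquiv.norm_map]

end Composition

theorem norm_comp_sub_le_of_holder {E F G : Type*} [SeminormedAddCommGroup E]
    [NormedAddCommGroup F] [NormedSpace ℝ F] [NormedAddCommGroup G] [NormedSpace ℝ G]
    {f : F → G} {g : E → F} {α Kg : ℝ} (hf : ContDiff ℝ 1 f)
    (hfD : ∀ a, ‖iteratedFDeriv ℝ 1 f a‖ ≤ 1) (hgH : ∀ x y, ‖g x - g y‖ ≤ Kg * ‖x - y‖ ^ α)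
    (x y : E) : ‖f (g x) - f (g y)‖ ≤ Kg * ‖x - y‖ ^ α := by
  rw [← norm_iteratedFDeriv_zero_sub]
  refine (norm_iteratedFDeriv_sub_le_of_norm_iteratedFDeriv_succ_le hf hfD _ _).trans ?_
  rw [one_mul]
  exact hgH x y

theorem norm_iteratedFDeriv_le_one_of_sum_le_one {f : ℝ → ℝ} {c : ℕ → ℝ} {N : ℕ}
    (hfc : ∀ k ∈ Finset.Icc 1 N, ∀ x, |iteratedDeriv k f x| ≤ c k)
    (hc : ∑ k ∈ Finset.Icc 1 N, c k ≤ 1) :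
    ∀ k ∈ Finset.Icc 1 N, ∀ x, ‖iteratedFDeriv ℝ k f x‖ ≤ 1 := fun k hk x => by
  rw [norm_iteratedFDeriv_eq_norm_iteratedDeriv, Real.norm_eq_abs]
  exact (hfc k hk x).trans ((Finset.single_le_sum (fun j hj => (abs_nonneg _).trans (hfc j hj 0))
    hk).trans hc)

theorem le_of_forall_pos_le_mul_rpow_add {a C Kg Km w p : ℝ} (hp : 0 ≤ p)
    (h : ∀ ε > 0, a ≤ C * ((Kg + ε) ^ p + (Km + ε)) * w) : a ≤ C * (Kg ^ p + Km) * w := by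
  have hcont : Continuous fun ε : ℝ => C * ((Kg + ε) ^ p + (Km + ε)) * w :=
    (continuous_const.mul (((continuous_const.add continuous_id).rpow_const fun _ => Or.inr hp).add
      (continuous_const.add continuous_id))).mul continuous_const
  simpa using ge_of_tendsto ((hcont.tendsto 0).mono_left nhdsWithin_le_nhds)
    (eventually_nhdsWithin_of_forall (s := Ioi 0) h)

theorem composition_holder_bound_general
    (d m : ℕ) (α : ℝ) (hα : α ∈ Ioo (0 : ℝ) 1) :
    ∃ C : ℝ, 0 < C ∧
      ∀ (f : ℝ → ℝ) (c : ℕ → ℝ),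
        ContDiff ℝ (m + 2) f →
        (∀ k ∈ Finset.Icc 1 (m + 2), ∀ x : ℝ, |iteratedDeriv k f x| ≤ c k) →
        (∑ k ∈ Finset.Icc 1 (m + 2), c k) ≤ 1 →
        ∀ (g : EuclideanSpace ℝ (Fin d) → ℝ) (M : ℕ → ℝ) (Kg Km : ℝ),
          ContDiff ℝ m g →
          (∀ j ∈ Finset.Icc 1 m, ∀ x, ‖iteratedFDeriv ℝ j g x‖ ≤ M j) →
          0 ≤ Kg → (∀ x y, |g x - g y| ≤ Kg * ‖x - y‖ ^ α) →
          0 ≤ Km →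
          (∀ x y, ‖iteratedFDeriv ℝ m g x - iteratedFDeriv ℝ m g y‖ ≤ Km * ‖x - y‖ ^ α) →
          ∀ x y,
            ‖iteratedFDeriv ℝ m (fun z => f (g z)) x -
                iteratedFDeriv ℝ m (fun z => f (g z)) y‖ ≤
              C * (Kg ^ (((m : ℝ) + α) / α) + Km) * ‖x - y‖ ^ α := by
  obtain ⟨hα₀, hα₁⟩ := hα
  rcases Nat.eq_zero_or_pos m with rfl | hm
  · refine ⟨1, one_pos, fun f c hf hfc hc g _ Kg Km _ _ _ hgH hKm _ x y => ?_⟩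
    have hfg := norm_comp_sub_le_of_holder (hf.of_le (by norm_num))
      (norm_iteratedFDeriv_le_one_of_sum_le_one hfc hc 1 (by simp)) hgH x y
    rw [norm_iteratedFDeriv_zero_sub, Nat.cast_zero, zero_add, div_self hα₀.ne', Real.rpow_one]
    nlinarith [Real.rpow_nonneg (norm_nonneg (x - y)) α]
  · refine ⟨compositionHolderConst m, compositionHolderConst_pos m,
      fun f c hf hfc hc g _ Kg Km hg _ _ hgH _ hgmH x y => ?_⟩
    have hfD : ∀ k ∈ Finset.Icc 1 (m + 1), ∀ a, ‖iteratedFDeriv ℝ k f a‖ ≤ 1 := fun k hk =>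
      norm_iteratedFDeriv_le_one_of_sum_le_one hfc hc k (Finset.Icc_subset_Icc le_rfl (by omega) hk)
    refine le_of_forall_pos_le_mul_rpow_add (by positivity) fun ε hε => ?_
    exact norm_iteratedFDeriv_comp_sub_le_of_pos hm (hf.of_le (by norm_cast; omega)) hfD hg hα₀
      hα₁.le (by positivity) (by positivity)
      (fun x y => (hgH x y).trans (by gcongr; linarith))
      (fun x y => (hgmH x y).trans (by gcongr; linarith)) x y

/-- Hölder bound on the `m`-th derivative of a composition:
`[∇^m (f ∘ g)]_{Ċ^α} ≲ [g]_{Ċ^α}^{(m+α)/α} + [∇^m g]_{Ċ^α}` when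
`Σ_{k=1}^{m+2} ‖f^{(k)}‖_∞ ≤ 1`. -/
theorem composition_holder_bound
    (d m : ℕ) (hd : 1 ≤ d) (α : ℝ) (hα : α ∈ Ioo (0 : ℝ) 1) :
    ∃ C : ℝ, 0 < C ∧
      ∀ (f : ℝ → ℝ) (c : ℕ → ℝ),
        ContDiff ℝ (m + 2) f →
        (∀ k ∈ Finset.Icc 1 (m + 2), ∀ x : ℝ, |iteratedDeriv k f x| ≤ c k) →
        (∑ k ∈ Finset.Icc 1 (m + 2), c k) ≤ 1 →
        ∀ (g : EuclideanSpace ℝ (Fin d) → ℝ) (M : ℕ → ℝ) (Kg Km : ℝ),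
          ContDiff ℝ m g →
          (∀ j ∈ Finset.Icc 1 m, ∀ x, ‖iteratedFDeriv ℝ j g x‖ ≤ M j) →
          0 ≤ Kg → (∀ x y, |g x - g y| ≤ Kg * ‖x - y‖ ^ α) →
          0 ≤ Km →
          (∀ x y, ‖iteratedFDeriv ℝ m g x - iteratedFDeriv ℝ m g y‖ ≤ Km * ‖x - y‖ ^ α) →
          ∀ x y,
            ‖iteratedFDeriv ℝ m (fun z => f (g z)) x -
                iteratedFDeriv ℝ m (fun z => f (g z)) y‖ ≤
              C * (Kg ^ (((m : ℝ) + α) / α) + Km) * ‖x - y‖ ^ α :=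
  composition_holder_bound_general d m α hα
end

section
/- Let d, N ≥ 1 be integers and ν ∈ (0, 1/2). Let g : ℝ^d → ℝ^N be continuously differentiable with [g]_{Ċ^{1−ν}} < ∞ and [∇g]_{Ċ^{ν}} < ∞. For α ∈ ℝ^d \ {0} define the second-difference quotient 𝒪_α g(x) := (2g(x) − g(x+α) − g(x−α)) / |α|. Then there is a constant C depending only on d and ν such that ∫_{ℝ^d} ( sup_x ‖𝒪_α g(x)‖ ) · dα / |α|^d ≤ C ( [∇g]_{Ċ^{ν}} )^{1/2} ( [g]_{Ċ^{1−ν}} )^{1/2}. -/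
/-!
The second difference `2 g x - g (x + α) - g (x - α)` is at most `2 K₁ |α|^(1-ν)` by Hölder
continuity of `g`, and at most `2 K₂ |α|^(1+ν)` by comparing both `g (x ± α)` with the
first-order Taylor polynomial at `x` (the linear terms cancel). So the supremum of the quotient
`𝒪_α g` is bounded by the radial function `2 min (K₁ |α|^(-ν)) (K₂ |α|^ν)`. In polar coordinates
the measure `dα / |α|^d` becomes a multiple of `dr / r`, and
`∫₀^∞ min (K₁ r^(-ν)) (K₂ r^ν) dr / r ≤ 2 √(K₁ K₂) / ν`, by splitting the integral at the radius
where the two terms balance.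
-/

open MeasureTheory Set Metric Module

section MinRpow

variable {A B ν : ℝ}

lemma min_rpow_div_le_left {r : ℝ} (hr : 0 < r) :
    min (A * r ^ (-ν)) (B * r ^ ν) / r ≤ A * r ^ (-ν - 1) := by
  rw [Real.rpow_sub_one hr.ne', ← mul_div_assoc]
  gcongr
  exact min_le_left _ _

lemma min_rpow_div_le_right {r : ℝ} (hr : 0 < r) :
    min (A * r ^ (-ν)) (B * r ^ ν) / r ≤ B * r ^ (ν - 1) := by
  rw [Real.rpow_sub_one hr.ne', ← mul_div_assoc]
  gcongr
  exact min_le_right _ _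

lemma integrableOn_Ioc_rpow_sub_one (hν : 0 < ν) {R : ℝ} (hR : 0 ≤ R) :
    IntegrableOn (fun r : ℝ ↦ B * r ^ (ν - 1)) (Ioc 0 R) :=
  ((intervalIntegrable_iff_integrableOn_Ioc_of_le hR).1
    (intervalIntegral.intervalIntegrable_rpow' (by linarith))).const_mul B

lemma integrableOn_Ioi_rpow_neg_sub_one (hν : 0 < ν) {R : ℝ} (hR : 0 < R) :
    IntegrableOn (fun r : ℝ ↦ A * r ^ (-ν - 1)) (Ioi R) :=
  (integrableOn_Ioi_rpow_of_lt (by linarith) hR).const_mul A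

lemma integral_Ioc_rpow_sub_one (hν : 0 < ν) {R : ℝ} (hR : 0 ≤ R) :
    ∫ r in Ioc 0 R, B * r ^ (ν - 1) = B * R ^ ν / ν := by
  rw [integral_const_mul, ← intervalIntegral.integral_of_le hR,
    integral_rpow (Or.inl (by linarith)), sub_add_cancel, Real.zero_rpow hν.ne', sub_zero,
    mul_div_assoc]

lemma integral_Ioi_rpow_neg_sub_one (hν : 0 < ν) {R : ℝ} (hR : 0 < R) :
    ∫ r in Ioi R, A * r ^ (-ν - 1) = A * R ^ (-ν) / ν := by
  rw [integral_const_mul, integral_Ioi_rpow_of_lt (by linarith) hR, sub_add_cancel,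
    neg_div_neg_eq, mul_div_assoc]

lemma integrableOn_min_rpow_div (hν : 0 < ν) (hA : 0 ≤ A) (hB : 0 ≤ B) :
    IntegrableOn (fun r ↦ min (A * r ^ (-ν)) (B * r ^ ν) / r) (Ioi 0) := by
  have hmeas : AEStronglyMeasurable (fun r : ℝ ↦ min (A * r ^ (-ν)) (B * r ^ ν) / r) :=
    ((Measurable.min (by fun_prop) (by fun_prop)).div measurable_id).aestronglyMeasurable
  have hnorm {r : ℝ} (hr : 0 < r) :
      ‖min (A * r ^ (-ν)) (B * r ^ ν) / r‖ = min (A * r ^ (-ν)) (B * r ^ ν) / r :=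
    Real.norm_of_nonneg (by positivity)
  rw [← Ioc_union_Ioi_eq_Ioi zero_le_one]
  refine IntegrableOn.union ?_ ?_
  · refine (integrableOn_Ioc_rpow_sub_one (B := B) hν zero_le_one).mono' hmeas.restrict
      (ae_restrict_of_forall_mem measurableSet_Ioc fun r hr ↦ ?_)
    rw [hnorm hr.1]
    exact min_rpow_div_le_right hr.1
  · refine (integrableOn_Ioi_rpow_neg_sub_one (A := A) hν zero_lt_one).mono' hmeas.restrict
      (ae_restrict_of_forall_mem measurableSet_Ioi fun r hr ↦ ?_)
    rw [hnorm (zero_lt_one.trans hr)]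
    exact min_rpow_div_le_left (zero_lt_one.trans hr)

lemma integral_min_rpow_div_le (hν : 0 < ν) (hA : 0 ≤ A) (hB : 0 ≤ B) {R : ℝ} (hR : 0 < R) :
    ∫ r in Ioi 0, min (A * r ^ (-ν)) (B * r ^ ν) / r ≤ (B * R ^ ν + A * R ^ (-ν)) / ν := by
  have hint := integrableOn_min_rpow_div hν hA hB
  rw [← Ioc_union_Ioi_eq_Ioi hR.le, setIntegral_union (Ioc_disjoint_Ioi le_rfl) measurableSet_Ioi
    (hint.mono_set Ioc_subset_Ioi_self) (hint.mono_set (Ioi_subset_Ioi hR.le)), add_div]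
  gcongr ?_ + ?_
  · rw [← integral_Ioc_rpow_sub_one hν hR.le]
    exact setIntegral_mono_on (hint.mono_set Ioc_subset_Ioi_self)
      (integrableOn_Ioc_rpow_sub_one hν hR.le) measurableSet_Ioc
      fun r hr ↦ min_rpow_div_le_right hr.1
  · rw [← integral_Ioi_rpow_neg_sub_one hν hR]
    exact setIntegral_mono_on (hint.mono_set (Ioi_subset_Ioi hR.le))
      (integrableOn_Ioi_rpow_neg_sub_one hν hR) measurableSet_Ioi
      fun r hr ↦ min_rpow_div_le_left (hR.trans hr)

lemma integral_min_rpow_div_le_sqrt_mul_sqrt (hν : 0 < ν) (hA : 0 ≤ A) (hB : 0 ≤ B) :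
    ∫ r in Ioi 0, min (A * r ^ (-ν)) (B * r ^ ν) / r ≤ 2 * √A * √B / ν := by
  by_cases hAB : A = 0 ∨ B = 0
  · have hzero : ∀ r ∈ Ioi (0 : ℝ), min (A * r ^ (-ν)) (B * r ^ ν) / r = 0 := by
      intro r (hr : 0 < r)
      rcases hAB with rfl | rfl <;> simp [hr.le, Real.rpow_nonneg, hA, hB, mul_nonneg]
    rw [setIntegral_congr_fun measurableSet_Ioi hzero]
    rcases hAB with rfl | rfl <;> simp
  obtain ⟨a, ha, rfl⟩ : ∃ a, 0 < a ∧ A = a ^ 2 :=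
    ⟨√A, Real.sqrt_pos.2 (hA.lt_of_ne' (by tauto)), (Real.sq_sqrt hA).symm⟩
  obtain ⟨b, hb, rfl⟩ : ∃ b, 0 < b ∧ B = b ^ 2 :=
    ⟨√B, Real.sqrt_pos.2 (hB.lt_of_ne' (by tauto)), (Real.sq_sqrt hB).symm⟩
  -- the balancing radius, where `A r^(-ν) = B r^ν`
  set R := (a / b) ^ ν⁻¹
  have hR : 0 < R := by positivity
  have hRν : R ^ ν = a / b := Real.rpow_inv_rpow (by positivity) hν.ne'
  refine (integral_min_rpow_div_le hν hA hB hR).trans_eq ?_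
  rw [Real.rpow_neg hR.le, hRν, Real.sqrt_sq ha.le, Real.sqrt_sq hb.le]
  field_simp
  ring

end MinRpow

section RadialIntegral

variable {E : Type*} [NormedAddCommGroup E] [NormedSpace ℝ E] [Nontrivial E]
  [FiniteDimensional ℝ E]

lemma pow_finrank_sub_one_smul_div_pow_finrank (φ : ℝ → ℝ) {r : ℝ} (hr : 0 < r) :
    r ^ (finrank ℝ E - 1) • (φ r / r ^ finrank ℝ E) = φ r / r := by
  rw [smul_eq_mul, ← Nat.sub_add_cancel (finrank_pos (R := ℝ) (M := E)), pow_succ,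
    Nat.add_sub_cancel]
  field_simp

variable [MeasurableSpace E] [BorelSpace E] (μ : Measure E) [μ.IsAddHaarMeasure]

lemma integrable_fun_norm_div_pow_finrank_iff {φ : ℝ → ℝ} :
    Integrable (fun x : E ↦ φ ‖x‖ / ‖x‖ ^ finrank ℝ E) μ ↔
      IntegrableOn (fun r ↦ φ r / r) (Ioi 0) := by
  rw [integrable_fun_norm_addHaar μ (f := fun r ↦ φ r / r ^ finrank ℝ E)]
  exact integrableOn_congr_fun
    (fun r hr ↦ pow_finrank_sub_one_smul_div_pow_finrank φ hr) measurableSet_Ioi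

lemma integral_fun_norm_div_pow_finrank (φ : ℝ → ℝ) :
    ∫ x : E, φ ‖x‖ / ‖x‖ ^ finrank ℝ E ∂μ =
      finrank ℝ E * μ.real (ball 0 1) * ∫ r in Ioi 0, φ r / r := by
  rw [integral_fun_norm_addHaar μ (fun r ↦ φ r / r ^ finrank ℝ E), setIntegral_congr_fun
    measurableSet_Ioi fun r hr ↦ pow_finrank_sub_one_smul_div_pow_finrank φ hr,
    nsmul_eq_mul, smul_eq_mul, mul_assoc]

end RadialIntegral

section SecondDifference

lemma nonneg_of_norm_sub_le_mul_rpow {E F : Type*} [NormedAddCommGroup E] [Nontrivial E]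
    [SeminormedAddCommGroup F] {f : E → F} {K s : ℝ}
    (hf : ∀ x y, ‖f x - f y‖ ≤ K * ‖x - y‖ ^ s) : 0 ≤ K := by
  obtain ⟨x, y, hxy⟩ := exists_pair_ne E
  exact nonneg_of_mul_nonneg_left ((norm_nonneg _).trans (hf x y))
    (Real.rpow_pos_of_pos (norm_pos_iff.2 (sub_ne_zero.2 hxy)) s)

lemma norm_two_smul_sub_sub_le_of_holder {E F : Type*} [SeminormedAddCommGroup E]
    [SeminormedAddCommGroup F] [NormedSpace ℝ F] {g : E → F} {K s : ℝ}
    (hg : ∀ x y, ‖g x - g y‖ ≤ K * ‖x - y‖ ^ s) (x a : E) :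
    ‖(2 : ℝ) • g x - g (x + a) - g (x - a)‖ ≤ 2 * (K * ‖a‖ ^ s) := by
  have h_add := hg x (x + a)
  have h_sub := hg x (x - a)
  rw [sub_add_cancel_left, norm_neg] at h_add
  rw [sub_sub_cancel] at h_sub
  calc ‖(2 : ℝ) • g x - g (x + a) - g (x - a)‖ = ‖(g x - g (x + a)) + (g x - g (x - a))‖ := by
        rw [two_smul]; abel_nf
    _ ≤ 2 * (K * ‖a‖ ^ s) := (norm_add_le _ _).trans (by linarith)

variable {E F : Type*} [NormedAddCommGroup E] [NormedSpace ℝ E]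
  [NormedAddCommGroup F] [NormedSpace ℝ F] {g : E → F} {K ν : ℝ}

lemma norm_sub_sub_fderiv_le_of_fderiv_holder (hg : Differentiable ℝ g) (hK : 0 ≤ K) (hν : 0 ≤ ν)
    (hg' : ∀ x y, ‖fderiv ℝ g x - fderiv ℝ g y‖ ≤ K * ‖x - y‖ ^ ν) (x b : E) :
    ‖g (x + b) - g x - fderiv ℝ g x b‖ ≤ K * ‖b‖ ^ ν * ‖b‖ := by
  have hbound : ∀ z ∈ closedBall x ‖b‖, ‖fderiv ℝ g z - fderiv ℝ g x‖ ≤ K * ‖b‖ ^ ν :=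
    fun z hz ↦ (hg' z x).trans (by gcongr; exact mem_closedBall_iff_norm.1 hz)
  simpa using (convex_closedBall x ‖b‖).norm_image_sub_le_of_norm_fderiv_le'
    (fun z _ ↦ hg z) hbound (mem_closedBall_self (norm_nonneg b))
    (by simp : x + b ∈ closedBall x ‖b‖)

lemma norm_two_smul_sub_sub_le_of_fderiv_holder (hg : Differentiable ℝ g) (hK : 0 ≤ K)
    (hν : 0 ≤ ν) (hg' : ∀ x y, ‖fderiv ℝ g x - fderiv ℝ g y‖ ≤ K * ‖x - y‖ ^ ν) (x a : E) :
    ‖(2 : ℝ) • g x - g (x + a) - g (x - a)‖ ≤ 2 * (K * ‖a‖ ^ ν * ‖a‖) := by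
  have h_add := norm_sub_sub_fderiv_le_of_fderiv_holder hg hK hν hg' x a
  have h_sub := norm_sub_sub_fderiv_le_of_fderiv_holder hg hK hν hg' x (-a)
  rw [norm_neg, ← sub_eq_add_neg] at h_sub
  calc ‖(2 : ℝ) • g x - g (x + a) - g (x - a)‖
      = ‖(g (x + a) - g x - fderiv ℝ g x a) + (g (x - a) - g x - fderiv ℝ g x (-a))‖ := by
        rw [map_neg, two_smul, ← norm_neg]; abel_nf
    _ ≤ 2 * (K * ‖a‖ ^ ν * ‖a‖) := (norm_add_le _ _).trans (by linarith)

lemma iSup_norm_two_smul_sub_sub_div_le {K₁ K₂ : ℝ} (hg : Differentiable ℝ g) (hν : 0 ≤ ν)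
    (hK₁ : ∀ x y, ‖g x - g y‖ ≤ K₁ * ‖x - y‖ ^ (1 - ν)) (hK₂0 : 0 ≤ K₂)
    (hK₂ : ∀ x y, ‖fderiv ℝ g x - fderiv ℝ g y‖ ≤ K₂ * ‖x - y‖ ^ ν) {a : E} (ha : a ≠ 0) :
    ⨆ x, ‖(2 : ℝ) • g x - g (x + a) - g (x - a)‖ / ‖a‖ ≤
      2 * min (K₁ * ‖a‖ ^ (-ν)) (K₂ * ‖a‖ ^ ν) := by
  refine ciSup_le fun x ↦ ?_
  have ha' : 0 < ‖a‖ := norm_pos_iff.2 ha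
  rw [div_le_iff₀ ha', mul_assoc, min_mul_of_nonneg _ _ ha'.le, mul_assoc,
    ← Real.rpow_add_one ha'.ne', neg_add_eq_sub, mul_min_of_nonneg _ _ zero_le_two]
  exact le_min (norm_two_smul_sub_sub_le_of_holder hK₁ x a)
    (norm_two_smul_sub_sub_le_of_fderiv_holder hg hK₂0 hν hK₂ x a)

end SecondDifference

theorem integral_iSup_norm_two_smul_sub_sub_div_le {E F : Type*} [NormedAddCommGroup E]
    [NormedSpace ℝ E] [Nontrivial E] [FiniteDimensional ℝ E] [MeasurableSpace E] [BorelSpace E]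
    (μ : Measure E) [μ.IsAddHaarMeasure] [NormedAddCommGroup F] [NormedSpace ℝ F] {g : E → F}
    {K₁ K₂ ν : ℝ} (hν : 0 < ν) (hg : Differentiable ℝ g)
    (hK₁ : ∀ x y, ‖g x - g y‖ ≤ K₁ * ‖x - y‖ ^ (1 - ν))
    (hK₂ : ∀ x y, ‖fderiv ℝ g x - fderiv ℝ g y‖ ≤ K₂ * ‖x - y‖ ^ ν) :
    ∫ a, (⨆ x, ‖(2 : ℝ) • g x - g (x + a) - g (x - a)‖ / ‖a‖) / ‖a‖ ^ finrank ℝ E ∂μ ≤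
      4 * finrank ℝ E * μ.real (ball 0 1) / ν * √K₂ * √K₁ := by
  have hK₁0 := nonneg_of_norm_sub_le_mul_rpow hK₁
  have hK₂0 := nonneg_of_norm_sub_le_mul_rpow hK₂
  set φ : ℝ → ℝ := fun r ↦ 2 * min (K₁ * r ^ (-ν)) (K₂ * r ^ ν)
  have hφ_div : (fun r ↦ φ r / r) = fun r ↦ 2 * (min (K₁ * r ^ (-ν)) (K₂ * r ^ ν) / r) :=
    funext fun r ↦ mul_div_assoc _ _ _
  have hφ_int : IntegrableOn (fun r ↦ φ r / r) (Ioi 0) := by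
    rw [hφ_div]
    exact (integrableOn_min_rpow_div hν hK₁0 hK₂0).const_mul 2
  have hmajor (a : E) :
      (⨆ x, ‖(2 : ℝ) • g x - g (x + a) - g (x - a)‖ / ‖a‖) / ‖a‖ ^ finrank ℝ E ≤
        φ ‖a‖ / ‖a‖ ^ finrank ℝ E := by
    rcases eq_or_ne a 0 with rfl | ha
    · -- both sides are junk divisions by `‖0‖ = 0`
      simp [zero_pow finrank_pos.ne']
    exact div_le_div_of_nonneg_right
      (iSup_norm_two_smul_sub_sub_div_le hg hν.le hK₁ hK₂0 hK₂ ha) (by positivity)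
  calc _ ≤ ∫ a, φ ‖a‖ / ‖a‖ ^ finrank ℝ E ∂μ :=
        integral_mono_of_nonneg (.of_forall fun a ↦ div_nonneg
            (Real.iSup_nonneg fun x ↦ by positivity) (by positivity))
          ((integrable_fun_norm_div_pow_finrank_iff μ).2 hφ_int) (.of_forall hmajor)
    _ = finrank ℝ E * μ.real (ball 0 1) * ∫ r in Ioi 0, φ r / r :=
        integral_fun_norm_div_pow_finrank μ φ
    _ ≤ finrank ℝ E * μ.real (ball 0 1) * (2 * (2 * √K₁ * √K₂ / ν)) := by
        rw [hφ_div, integral_const_mul]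
        gcongr
        exact integral_min_rpow_div_le_sqrt_mul_sqrt hν hK₁0 hK₂0
    _ = 4 * finrank ℝ E * μ.real (ball 0 1) / ν * √K₂ * √K₁ := by ring

theorem second_difference_integral_bound_general
    (d N : ℕ) (hd : 1 ≤ d) (ν : ℝ) (hν : ν ∈ Ioo (0 : ℝ) (1 / 2)) :
    ∃ C : ℝ, 0 < C ∧
      ∀ (g : EuclideanSpace ℝ (Fin d) → EuclideanSpace ℝ (Fin N)) (K₁ K₂ : ℝ),
        ContDiff ℝ 1 g →
        (∀ x y, ‖g x - g y‖ ≤ K₁ * ‖x - y‖ ^ (1 - ν)) →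
        (∀ x y, ‖fderiv ℝ g x - fderiv ℝ g y‖ ≤ K₂ * ‖x - y‖ ^ ν) →
        (∫ α : EuclideanSpace ℝ (Fin d),
            (⨆ x, ‖(2 : ℝ) • g x - g (x + α) - g (x - α)‖ / ‖α‖) / ‖α‖ ^ d) ≤
          C * Real.sqrt K₂ * Real.sqrt K₁ := by
  have hdim : finrank ℝ (EuclideanSpace ℝ (Fin d)) = d := finrank_euclideanSpace_fin
  have : Nontrivial (EuclideanSpace ℝ (Fin d)) :=
    Module.nontrivial_of_finrank_pos (R := ℝ) (by rw [hdim]; exact hd)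
  have hV : 0 < volume.real (ball (0 : EuclideanSpace ℝ (Fin d)) 1) :=
    ENNReal.toReal_pos (measure_ball_pos _ _ one_pos).ne' measure_ball_lt_top.ne
  refine ⟨4 * d * volume.real (ball (0 : EuclideanSpace ℝ (Fin d)) 1) / ν,
    by have := hν.1; positivity, fun g K₁ K₂ hg hK₁ hK₂ ↦ ?_⟩
  simpa only [hdim] using integral_iSup_norm_two_smul_sub_sub_div_le volume hν.1
    (hg.differentiable one_ne_zero) hK₁ hK₂

/-- Integral bound for second-difference quotients:
`∫ (sup_x ‖𝒪_α g(x)‖) dα/|α|^d ≲ [∇g]_{Ċ^ν}^{1/2} [g]_{Ċ^{1−ν}}^{1/2}`. -/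
theorem second_difference_integral_bound
    (d N : ℕ) (hd : 1 ≤ d) (hN : 1 ≤ N) (ν : ℝ) (hν : ν ∈ Ioo (0 : ℝ) (1 / 2)) :
    ∃ C : ℝ, 0 < C ∧
      ∀ (g : EuclideanSpace ℝ (Fin d) → EuclideanSpace ℝ (Fin N)) (K₁ K₂ : ℝ),
        ContDiff ℝ 1 g →
        (∀ x y, ‖g x - g y‖ ≤ K₁ * ‖x - y‖ ^ (1 - ν)) →
        (∀ x y, ‖fderiv ℝ g x - fderiv ℝ g y‖ ≤ K₂ * ‖x - y‖ ^ ν) →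
        (∫ α : EuclideanSpace ℝ (Fin d),
            (⨆ x, ‖(2 : ℝ) • g x - g (x + α) - g (x - α)‖ / ‖α‖) / ‖α‖ ^ d) ≤
          C * Real.sqrt K₂ * Real.sqrt K₁ :=
  second_difference_integral_bound_general d N hd ν hν
end

section
/- Let h : ℝ → ℝ be continuous and 2π-periodic, and suppose the function α ↦ h(α)/α is integrable on (−π, π). Then the limit lim_{N→∞} ∫_{−(2N+1)π}^{(2N+1)π} h(α)/α dα exists and equals ∫_{−π}^{π} h(α) · (1/2)·cot(α/2) dα. -/
/-! Cutting the window `[-(2N+1)π, (2N+1)π]` into the translates `[-π, π] + 2kπ` and using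
periodicity turns its integral into `∫_{-π}^{π} h(α) (1/α + Σ_{0<|k|≤N} 1/(α + 2kπ)) dα`.
By the Mittag-Leffler expansion `π cot(πx) = 1/x + Σ_{k≥1} (1/(x - k) + 1/(x + k))` these
kernels converge to `½ cot(α/2)`, and after removing `1/α` their terms are bounded on `[-π, π]`
by `1/k²`, so dominated convergence applies; `h(α)/α` itself is integrable by hypothesis. -/

open MeasureTheory Set Filter Real Topology Interval

theorem intervalIntegral.integral_neg_odd_mul_eq_add_sum {E : Type*} [NormedAddCommGroup E]
    [NormedSpace ℝ E] {f : ℝ → E} (hf : LocallyIntegrable f) (a : ℝ) (N : ℕ) :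
    ∫ x in -((2 * N + 1) * a)..(2 * N + 1) * a, f x =
      (∫ x in -a..a, f x) + ∑ n ∈ Finset.range N,
        ∫ x in -a..a, (f (x + (n + 1) * (2 * a)) + f (x - (n + 1) * (2 * a))) := by
  have hI : ∀ b c, IntervalIntegrable f volume b c := fun b c =>
    (hf.integrableOn_isCompact isCompact_uIcc).intervalIntegrable
  induction N with
  | zero => simp
  | succ N ih =>
    set c : ℝ := (N + 1) * (2 * a)
    set b : ℝ := (2 * N + 1) * a
    set b' : ℝ := (2 * ↑(N + 1) + 1) * a
    have hplus : IntervalIntegrable (fun x => f (x + c)) volume (-a) a :=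
      (IntervalIntegrable.comp_add_right_iff).mpr (hI _ _)
    have hminus : IntervalIntegrable (fun x => f (x - c)) volume (-a) a := by
      simpa only [sub_eq_add_neg] using
        (IntervalIntegrable.comp_add_right_iff (c := -c)).mpr (hI _ _)
    rw [Finset.sum_range_succ, ← add_assoc, ← ih, intervalIntegral.integral_add hplus hminus,
      intervalIntegral.integral_comp_add_right, intervalIntegral.integral_comp_sub_right,
      show -a + c = b by ring, show a + c = b' by simp only [b', c]; push_cast; ring,
      show -a - c = -b' by simp only [b', c]; push_cast; ring, show a - c = -b by ring,
      ← intervalIntegral.integral_add_adjacent_intervals (hI (-b') (-b)) (hI (-b) b'),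
      ← intervalIntegral.integral_add_adjacent_intervals (hI (-b) b) (hI b b')]
    abel

theorem locallyIntegrable_of_integrableOn_nhds_of_continuousOn_compl {X E : Type*}
    [TopologicalSpace X] [T1Space X] [MeasurableSpace X] [OpensMeasurableSpace X]
    [NormedAddCommGroup E] [SecondCountableTopologyEither X E] {μ : Measure X}
    [IsLocallyFiniteMeasure μ] {f : X → E} {x₀ : X} {s : Set X} (hs : s ∈ 𝓝 x₀)
    (hfs : IntegrableOn f s μ) (hf : ContinuousOn f {x₀}ᶜ) : LocallyIntegrable f μ := by
  intro x
  by_cases hx : x = x₀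
  · exact hx ▸ ⟨s, hs, hfs⟩
  · simpa only [isOpen_compl_singleton.nhdsWithin_eq hx] using
      hf.integrableAt_nhdsWithin isOpen_compl_singleton.measurableSet hx

@[fun_prop]
theorem Real.measurable_cot : Measurable cot := by
  rw [show cot = fun x => cos x / sin x from funext cot_eq_cos_div_sin]
  fun_prop

theorem summable_one_div_nat_add_one_sq : Summable fun n : ℕ => 1 / ((n : ℝ) + 1) ^ 2 := by
  simpa using (summable_nat_add_iff 1).mpr (Real.summable_one_div_nat_pow.mpr one_lt_two)

theorem Real.hasSum_cot_series {x : ℝ} (hx : ∀ n : ℤ, x ≠ n) :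
    HasSum (fun n : ℕ => 1 / (x - (n + 1)) + 1 / (x + (n + 1))) (π * cot (π * x) - 1 / x) := by
  have hxZ : (x : ℂ) ∈ Complex.integerComplement := by
    rintro ⟨n, hn⟩
    exact hx n (by exact_mod_cast hn.symm)
  rw [← Complex.hasSum_ofReal]
  push_cast [Complex.ofReal_cot]
  exact (summable_cotTerm hxZ).hasSum_iff_tendsto_nat.mpr (tendsto_logDeriv_euler_cot_sub hxZ)

noncomputable def halfCotTerm (α : ℝ) (n : ℕ) : ℝ :=
  1 / (α - (n + 1) * (2 * π)) + 1 / (α + (n + 1) * (2 * π))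

theorem Real.hasSum_halfCotTerm {α : ℝ} (hα : ∀ n : ℤ, α ≠ n * (2 * π)) :
    HasSum (halfCotTerm α) (cot (α / 2) / 2 - 1 / α) := by
  have hx : ∀ n : ℤ, α / (2 * π) ≠ n := fun n h => hα n (by rw [← h]; field_simp)
  have hterm (n : ℕ) :
      1 / (2 * π) * (1 / (α / (2 * π) - (n + 1)) + 1 / (α / (2 * π) + (n + 1))) =
        halfCotTerm α n := by
    rw [halfCotTerm]
    field_simp
  have hsum : 1 / (2 * π) * (π * cot (π * (α / (2 * π))) - 1 / (α / (2 * π))) =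
      cot (α / 2) / 2 - 1 / α := by
    rw [show π * (α / (2 * π)) = α / 2 by field_simp]
    field_simp
  simpa only [hterm, hsum] using (hasSum_cot_series hx).mul_left (1 / (2 * π))

theorem abs_halfCotTerm_le {α : ℝ} (hα : |α| ≤ π) (n : ℕ) :
    |halfCotTerm α n| ≤ 1 / ((n : ℝ) + 1) ^ 2 := by
  obtain ⟨hα₁, hα₂⟩ := abs_le.mp hα
  set m : ℝ := n + 1
  have hm₁ : 1 ≤ m := by simp [m]
  have hc : 2 * π ≤ m * (2 * π) := le_mul_of_one_le_left (by positivity) hm₁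
  have hsub : α - m * (2 * π) < 0 := by linarith [pi_pos]
  have hadd : 0 < α + m * (2 * π) := by linarith [pi_pos]
  rw [halfCotTerm, div_add_div _ _ hsub.ne hadd.ne', abs_div, abs_mul, abs_of_neg hsub,
    abs_of_pos hadd, div_le_div_iff₀ (by nlinarith) (by positivity),
    show 1 * (α + m * (2 * π)) + (α - m * (2 * π)) * 1 = 2 * α by ring, abs_mul, abs_two]
  have hm : 1 ≤ m ^ 2 := one_le_pow₀ hm₁
  have hsq : α ^ 2 ≤ π ^ 2 := sq_le_sq' hα₁ hα₂
  have h₁ : 2 * |α| * m ^ 2 ≤ 2 * π * m ^ 2 := by gcongr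
  have h₂ : π ^ 2 ≤ π ^ 2 * m ^ 2 := le_mul_of_one_le_right (by positivity) hm
  have h₃ : 2 * π * m ^ 2 ≤ 3 * π ^ 2 * m ^ 2 :=
    mul_le_mul_of_nonneg_right (by nlinarith [pi_gt_three]) (by positivity)
  nlinarith

theorem Real.ne_int_mul_two_pi_of_abs_le {α : ℝ} (h0 : α ≠ 0) (hα : |α| ≤ π) (n : ℤ) :
    α ≠ n * (2 * π) := by
  rintro rfl
  have hn : (1 : ℝ) ≤ |(n : ℝ)| := by
    exact_mod_cast Int.one_le_abs (by rintro rfl; simp at h0)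
  rw [abs_mul, abs_of_pos (by positivity : (0 : ℝ) < 2 * π)] at hα
  nlinarith [pi_pos]

theorem abs_cot_half_div_two_sub_one_div_le {α : ℝ} (h0 : α ≠ 0) (hα : |α| ≤ π) :
    |cot (α / 2) / 2 - 1 / α| ≤ ∑' n : ℕ, 1 / ((n : ℝ) + 1) ^ 2 :=
  (hasSum_halfCotTerm (ne_int_mul_two_pi_of_abs_le h0 hα)).norm_le_of_bounded
    summable_one_div_nat_add_one_sq.hasSum (abs_halfCotTerm_le hα)

theorem intervalIntegrable_mul_cot_half_div_two_sub_one_div {h : ℝ → ℝ}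
    (hh : IntervalIntegrable h volume (-π) π) :
    IntervalIntegrable (fun x => h x * (cot (x / 2) / 2 - 1 / x)) volume (-π) π := by
  refine (hh.abs.mul_const (∑' n : ℕ, 1 / ((n : ℝ) + 1) ^ 2)).mono_fun' ?_ ?_
  · exact hh.def'.aestronglyMeasurable.mul (Measurable.aestronglyMeasurable (by fun_prop))
  · rw [EventuallyLE, ae_restrict_iff' measurableSet_uIoc]
    filter_upwards [Measure.ae_ne volume 0] with x hx0 hx
    rw [uIoc_of_le (by linarith [pi_pos])] at hx
    rw [norm_mul, Real.norm_eq_abs]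
    exact mul_le_mul_of_nonneg_left
      (abs_cot_half_div_two_sub_one_div_le hx0 (abs_le.mpr ⟨hx.1.le, hx.2⟩)) (abs_nonneg _)

theorem hasSum_integral_mul_halfCotTerm {h : ℝ → ℝ}
    (hh : IntervalIntegrable h volume (-π) π) :
    HasSum (fun n : ℕ => ∫ x in -π..π, h x * halfCotTerm x n)
      (∫ x in -π..π, h x * (cot (x / 2) / 2 - 1 / x)) := by
  have hIoc : Ι (-π) π = Ioc (-π) π := uIoc_of_le (by linarith [pi_pos])
  refine intervalIntegral.hasSum_integral_of_dominated_convergence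
    (fun n x => |h x| * (1 / ((n : ℝ) + 1) ^ 2)) (fun n => ?_) (fun n => ?_) ?_ ?_ ?_
  · exact hh.def'.aestronglyMeasurable.mul
      (Measurable.aestronglyMeasurable (by unfold halfCotTerm; fun_prop))
  · refine ae_of_all _ fun x hx => ?_
    rw [hIoc] at hx
    rw [norm_mul, Real.norm_eq_abs]
    exact mul_le_mul_of_nonneg_left (abs_halfCotTerm_le (abs_le.mpr ⟨hx.1.le, hx.2⟩) n)
      (abs_nonneg _)
  · exact ae_of_all _ fun x _ => summable_one_div_nat_add_one_sq.mul_left _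
  · simp_rw [tsum_mul_left]
    exact hh.abs.mul_const _
  · filter_upwards [Measure.ae_ne volume 0] with x hx0 hx
    rw [hIoc] at hx
    exact (hasSum_halfCotTerm
      (ne_int_mul_two_pi_of_abs_le hx0 (abs_le.mpr ⟨hx.1.le, hx.2⟩))).mul_left (h x)

/-- For continuous `2π`-periodic `h` with `α ↦ h(α)/α` integrable on
`(−π,π)`, the principal-value integral over `ℝ` of `h(α)/α` (along the symmetric windows
`(−(2N+1)π, (2N+1)π)`) equals the periodic singular integral `∫_{−π}^{π} h(α)·(1/2)cot(α/2) dα`. -/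
theorem periodic_singular_integral_identity
    (h : ℝ → ℝ) (hcont : Continuous h) (hper : Function.Periodic h (2 * Real.pi))
    (hint : IntegrableOn (fun α => h α / α) (Ioo (-Real.pi) Real.pi)) :
    Tendsto (fun N : ℕ =>
        ∫ α in (-((2 * (N : ℝ) + 1) * Real.pi))..((2 * (N : ℝ) + 1) * Real.pi), h α / α)
      atTop
      (nhds (∫ α in (-Real.pi)..Real.pi,
        h α * ((1 / 2) * (Real.cos (α / 2) / Real.sin (α / 2))))) := by
  have hloc : LocallyIntegrable fun α => h α / α :=
    locallyIntegrable_of_integrableOn_nhds_of_continuousOn_compl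
      (Ioo_mem_nhds (neg_neg_of_pos pi_pos) pi_pos) hint
      (hcont.continuousOn.div continuousOn_id fun _ hα => hα)
  have hper' (n : ℕ) : Function.Periodic h ((n + 1) * (2 * π)) := by
    exact_mod_cast hper.nat_mul (n + 1)
  have hwindow (N : ℕ) :
      ∫ α in (-((2 * (N : ℝ) + 1) * π))..((2 * (N : ℝ) + 1) * π), h α / α =
        (∫ α in (-π)..π, h α / α) +
          ∑ n ∈ Finset.range N, ∫ x in -π..π, h x * halfCotTerm x n := by
    rw [intervalIntegral.integral_neg_odd_mul_eq_add_sum hloc]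
    refine congrArg _ (Finset.sum_congr rfl fun n _ =>
      intervalIntegral.integral_congr fun x _ => ?_)
    simp only [halfCotTerm, hper' n x, (hper' n).sub_eq x]
    ring
  have hh : IntervalIntegrable h volume (-π) π := hcont.intervalIntegrable _ _
  have hsplit : ∫ α in (-π)..π, h α * ((1 / 2) * (cos (α / 2) / sin (α / 2))) =
      (∫ α in (-π)..π, h α / α) + ∫ α in (-π)..π, h α * (cot (α / 2) / 2 - 1 / α) := by
    rw [← intervalIntegral.integral_add
      ((intervalIntegrable_iff_integrableOn_Ioo_of_le (by linarith [pi_pos])).mpr hint)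
      (intervalIntegrable_mul_cot_half_div_two_sub_one_div hh)]
    refine intervalIntegral.integral_congr fun α _ => ?_
    simp only [cot_eq_cos_div_sin]
    ring
  simp_rw [hwindow, hsplit]
  exact (hasSum_integral_mul_halfCotTerm hh).tendsto_sum_nat.const_add _
end
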